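/- arXiv:2301.09131 — 7 statements merged into one kernel-verified Lean document; each statement's English description precedes it below -/
import Mathlib

section
/- Assume [L1]#: there exists E₀ ∈ ℰ such that pr_{E₀}(α*) ∈ [0, M_α)^a and pr_{E₀}(α*) is the unique minimizer of Pe on the finite set {pr_E(α*) : E ∈ ℰ} ∩ [0,∞)^a. Then [L1] holds with α** = pr_{E₀}(α*); that is, pr_{E₀}(α*) is the unique minimizer of Pe on (α* + Ker(A)) ∩ [0, M_α]^a. -/
open Finset

/-- The span of the standard basis vectors `{e_j : j ∈ E}` of `ℝ^a`. -/
def spanStd (a : ℕ) (E : Finset (Fin a)) : Submodule ℝ (Fin a → ℝ) :=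
  Submodule.span ℝ {v : Fin a → ℝ | ∃ j ∈ E, v = Pi.single j (1 : ℝ)}

/-- The kernel `Ker(A) = {α : αA = 0}` of the row action `α ↦ αA`. -/
def kerRow (a r : ℕ) (A : Matrix (Fin a) (Fin r) ℝ) : Submodule ℝ (Fin a → ℝ) :=
  LinearMap.ker A.vecMulLinear

lemma spanStd_eq_range (a : ℕ) (E : Finset (Fin a)) :
    spanStd a E = Submodule.span ℝ (Set.range fun j : ↥E => Pi.single (j : Fin a) (1 : ℝ)) := by
  unfold spanStd
  congr 1
  ext v
  constructor
  · rintro ⟨j, hj, rfl⟩; exact ⟨⟨j, hj⟩, rfl⟩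
  · rintro ⟨⟨j, hj⟩, rfl⟩; exact ⟨j, hj, rfl⟩

lemma repr_spanStd {a : ℕ} {E : Finset (Fin a)} {x : Fin a → ℝ} (h : ∀ j ∉ E, x j = 0) :
    x = ∑ j ∈ E, x j • (Pi.single j (1 : ℝ) : Fin a → ℝ) := by
  funext i
  rw [Finset.sum_apply]
  simp only [Pi.smul_apply, Pi.single_apply, smul_eq_mul, mul_ite, mul_one, mul_zero]
  rw [Finset.sum_ite_eq E i x]
  by_cases hi : i ∈ E
  · simp [hi]
  · simp [hi, h i hi]

lemma mem_spanStd {a : ℕ} {E : Finset (Fin a)} {x : Fin a → ℝ} :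
    x ∈ spanStd a E ↔ ∀ j ∉ E, x j = 0 := by
  constructor
  · intro hx
    have hle : spanStd a E ≤ Submodule.pi {j | j ∉ E} (fun _ => (⊥ : Submodule ℝ ℝ)) := by
      apply Submodule.span_le.2
      rintro v ⟨j, hj, rfl⟩ i (hi : i ∉ E)
      have : i ≠ j := fun h => hi (h ▸ hj)
      simp [Pi.single_apply, this]
    intro j hj
    exact (hle hx) j hj
  · intro h
    rw [repr_spanStd h]
    exact Submodule.sum_mem _ fun j hj =>
      Submodule.smul_mem _ _ (Submodule.subset_span ⟨j, hj, rfl⟩)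

lemma li_single {a : ℕ} (E : Finset (Fin a)) :
    LinearIndependent ℝ (fun j : ↥E => (Pi.single (j : Fin a) (1 : ℝ) : Fin a → ℝ)) := by
  have := (Pi.basisFun ℝ (Fin a)).linearIndependent
  have h2 : (fun j : ↥E => (Pi.single (j : Fin a) (1 : ℝ) : Fin a → ℝ)) =
      (Pi.basisFun ℝ (Fin a)) ∘ (fun j : ↥E => (j : Fin a)) := by
    funext j; simp [Pi.basisFun_apply]
  rw [h2]
  exact this.comp _ Subtype.coe_injective

lemma finrank_spanStd (a : ℕ) (E : Finset (Fin a)) :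
    Module.finrank ℝ (spanStd a E) = E.card := by
  rw [spanStd_eq_range, finrank_span_eq_card (li_single E), Fintype.card_coe]



lemma extend_lemma (a r : ℕ) (ha : 0 < a) (A : Matrix (Fin a) (Fin r) ℝ)
    (hW : Module.finrank ℝ (kerRow a r A) = a - r) (h2r : a - r + (a - r) = a)
    (S : Finset (Fin a)) (hdisj : Disjoint (spanStd a S) (kerRow a r A)) :
    ∃ E : Finset (Fin a), (∀ j ∈ S, j ∈ E) ∧ E.card = a - r ∧
      IsCompl (spanStd a E) (kerRow a r A) := by
  classical
  set W := kerRow a r A with hWdef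
  set π := W.mkQ with hπ
  set v : Fin a → (Fin a → ℝ) ⧸ W := fun j => π (Pi.single j 1) with hv
  -- the images of the standard basis span the quotient
  have hv_span : Submodule.span ℝ (Set.range v) = ⊤ := by
    have h1 : Set.range v = π '' (Set.range fun j : Fin a => (Pi.single j 1 : Fin a → ℝ)) := by
      rw [← Set.range_comp]; rfl
    have h2 : Set.range (fun j : Fin a => (Pi.single j 1 : Fin a → ℝ)) =
        Set.range (Pi.basisFun ℝ (Fin a)) := by
      ext w
      simp only [Set.mem_range, Pi.basisFun_apply]
    rw [h1, ← Submodule.map_span, h2, (Pi.basisFun ℝ (Fin a)).span_eq, Submodule.map_top,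
      Submodule.range_mkQ]
  -- linear independence over S
  have hliS : LinearIndependent ℝ (fun j : ↥S => v j) := by
    have h1 := li_single S
    have h2 : Disjoint (Submodule.span ℝ
        (Set.range fun j : ↥S => (Pi.single (j : Fin a) (1 : ℝ) : Fin a → ℝ)))
        (LinearMap.ker π) := by
      rw [hπ, Submodule.ker_mkQ, ← spanStd_eq_range]; exact hdisj
    exact h1.map h2
  have hvinjS : ∀ j ∈ S, ∀ k ∈ S, v j = v k → j = k := by
    intro j hj k hk hjk
    have := hliS.injective (a₁ := ⟨j, hj⟩) (a₂ := ⟨k, hk⟩) hjk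
    exact congrArg Subtype.val this
  -- set version
  have hli_s : LinearIndependent ℝ ((↑) : ↥(v '' ↑S) → (Fin a → ℝ) ⧸ W) := by
    rw [Set.image_eq_range]
    exact hliS.linearIndepOn_id
  obtain ⟨b, hbt, hsb, htb, hlib⟩ :=
    exists_linearIndepOn_id_extension hli_s (Set.image_subset_range v ↑S)
  have hspanb : Submodule.span ℝ b = ⊤ := by
    rw [eq_top_iff, ← hv_span]
    exact Submodule.span_le.2 htb
  have hbfin : b.Finite := hlib.setFinite
  -- choice function
  let c : (Fin a → ℝ) ⧸ W → Fin a := fun x =>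
    if h : ∃ j ∈ S, v j = x then h.choose
    else if h' : ∃ j, v j = x then h'.choose else ⟨0, ha⟩
  have hc1 : ∀ x ∈ b, v (c x) = x := by
    intro x hx
    by_cases h : ∃ j ∈ S, v j = x
    · simp only [c, dif_pos h]; exact h.choose_spec.2
    · have h' : ∃ j, v j = x := hbt hx
      simp only [c, dif_neg h, dif_pos h']; exact h'.choose_spec
  have hc2 : ∀ j ∈ S, c (v j) = j := by
    intro j hj
    have h : ∃ k ∈ S, v k = v j := ⟨j, hj, rfl⟩
    simp only [c, dif_pos h]
    exact hvinjS _ h.choose_spec.1 _ hj h.choose_spec.2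
  let E : Finset (Fin a) := hbfin.toFinset.image c
  have hSE : ∀ j ∈ S, j ∈ E := by
    intro j hj
    have hvb : v j ∈ b := hsb (Set.mem_image_of_mem v hj)
    have : c (v j) ∈ E := Finset.mem_image_of_mem c (hbfin.mem_toFinset.2 hvb)
    rwa [hc2 j hj] at this
  have hvE : ∀ j ∈ E, v j ∈ b ∧ ∃ x ∈ b, c x = j := by
    intro j hj
    obtain ⟨x, hx, rfl⟩ := Finset.mem_image.1 hj
    have hxb := hbfin.mem_toFinset.1 hx
    exact ⟨(hc1 x hxb).symm ▸ hxb, x, hxb, rfl⟩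
  have hvinjE : ∀ j ∈ E, ∀ k ∈ E, v j = v k → j = k := by
    intro j hj k hk hjk
    obtain ⟨-, x, hx, rfl⟩ := hvE j hj
    obtain ⟨-, y, hy, rfl⟩ := hvE k hk
    rw [hc1 x hx, hc1 y hy] at hjk
    rw [hjk]
  have hvEb : v '' ↑E = b := by
    ext x
    constructor
    · rintro ⟨j, hj, rfl⟩
      exact (hvE j (by exact_mod_cast hj)).1
    · intro hx
      exact ⟨c x, by exact_mod_cast Finset.mem_image_of_mem c (hbfin.mem_toFinset.2 hx),
        hc1 x hx⟩
  -- cardinality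
  haveI : Fintype ↥b := hbfin.fintype
  have hcardE : E.card = Fintype.card ↥b := by
    have hinj : Set.InjOn c hbfin.toFinset := by
      intro x hx y hy hxy
      rw [← hc1 x (hbfin.mem_toFinset.1 hx), ← hc1 y (hbfin.mem_toFinset.1 hy), hxy]
    rw [Finset.card_image_of_injOn hinj, Set.Finite.card_toFinset]
  have hbbas : Module.Basis ↥b ℝ ((Fin a → ℝ) ⧸ W) := Module.Basis.mk (show LinearIndependent ℝ ((↑) : ↥b → (Fin a → ℝ) ⧸ W) from hlib) (by rw [Subtype.range_coe, hspanb])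
  have hfrQ : Module.finrank ℝ ((Fin a → ℝ) ⧸ W) = Fintype.card ↥b :=
    Module.finrank_eq_card_basis hbbas
  have hquot : Module.finrank ℝ ((Fin a → ℝ) ⧸ W) + Module.finrank ℝ W
      = Module.finrank ℝ (Fin a → ℝ) := Submodule.finrank_quotient_add_finrank W
  have hfra : Module.finrank ℝ (Fin a → ℝ) = a := by
    simp [Module.finrank_fintype_fun_eq_card]
  have hcard : E.card = a - r := by
    rw [hcardE, ← hfrQ]; omega
  -- linear independence of v on E
  have hliE : LinearIndependent ℝ (fun j : ↥E => v j) := by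
    have hg : ∀ j : ↥E, v (j : Fin a) ∈ b := fun j => (hvE _ j.2).1
    have : (fun j : ↥E => v j) = ((↑) : ↥b → _) ∘ (fun j : ↥E => (⟨v j, hg j⟩ : ↥b)) := rfl
    rw [this]
    apply hlib.comp
    intro j k hjk
    have : v (j : Fin a) = v (k : Fin a) := congrArg Subtype.val hjk
    exact Subtype.ext (hvinjE _ j.2 _ k.2 this)
  refine ⟨E, hSE, hcard, ?_, ?_⟩
  · -- Disjoint
    rw [Submodule.disjoint_def]
    intro x hxE hxW
    have hx0 : ∀ j ∉ E, x j = 0 := mem_spanStd.1 hxE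
    have hπx : π x = 0 := (Submodule.Quotient.mk_eq_zero W).2 hxW
    have hsum : ∑ j ∈ E, x j • v j = 0 := by
      have := congrArg π (repr_spanStd hx0)
      rw [hπx, map_sum] at this
      simp only [map_smul] at this
      exact this.symm
    have hcoef : ∀ j ∈ E, x j = 0 := by
      have := Fintype.linearIndependent_iff.1 hliE (fun j : ↥E => x j) ?_
      · intro j hj; exact this ⟨j, hj⟩
      · rw [← Finset.sum_attach E (fun j => x j • v j)] at hsum
        exact hsum
    funext j
    by_cases hj : j ∈ E
    · exact hcoef j hj
    · exact hx0 j hj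
  · -- Codisjoint
    rw [codisjoint_iff, eq_top_iff]
    intro y _
    have hmap : Submodule.map π (spanStd a E) = ⊤ := by
      unfold spanStd
      rw [Submodule.map_span]
      have : π '' {w : Fin a → ℝ | ∃ j ∈ E, w = Pi.single j (1 : ℝ)} = b := by
        rw [← hvEb]
        ext x
        constructor
        · rintro ⟨w, ⟨j, hj, rfl⟩, rfl⟩; exact ⟨j, by exact_mod_cast hj, rfl⟩
        · rintro ⟨j, hj, rfl⟩; exact ⟨Pi.single j 1, ⟨j, by exact_mod_cast hj, rfl⟩, rfl⟩
      rw [this, hspanb]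
    have : π y ∈ Submodule.map π (spanStd a E) := by rw [hmap]; trivial
    obtain ⟨x, hx, hxy⟩ := this
    have hyx : y - x ∈ W := by
      rw [← Submodule.ker_mkQ W, LinearMap.mem_ker, map_sub, hxy, sub_self]
    have : y = x + (y - x) := by ring
    rw [this]
    exact Submodule.add_mem_sup hx hyx

noncomputable def Pe (a : ℕ) (q : ℝ) (κ : Fin a → ℝ) (α : Fin a → ℝ) : ℝ :=
  ∑ j, κ j * |α j| ^ q

lemma Pe_nonneg (a : ℕ) (q : ℝ) (κ : Fin a → ℝ) (hκ : ∀ j, 0 < κ j) (α : Fin a → ℝ) :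
    0 ≤ Pe a q κ α :=
  Finset.sum_nonneg fun j _ => mul_nonneg (hκ j).le (Real.rpow_nonneg (abs_nonneg _) q)

lemma pe_concave (a : ℕ) (q : ℝ) (hq0 : 0 < q) (hq1 : q < 1) (κ : Fin a → ℝ)
    (hκ : ∀ j, 0 < κ j) (x y α : Fin a → ℝ) (hx : ∀ j, 0 ≤ x j) (hy : ∀ j, 0 ≤ y j)
    (hne : x ≠ y) (l : ℝ) (hl0 : 0 < l) (hl1 : l < 1)
    (hα : ∀ j, α j = l * x j + (1 - l) * y j) :
    l * Pe a q κ x + (1 - l) * Pe a q κ y < Pe a q κ α := by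
  obtain ⟨j₀, hj₀⟩ : ∃ j, x j ≠ y j := by
    by_contra h
    push_neg at h
    exact hne (funext h)
  have key : ∀ j, x j ≠ y j →
      l * (κ j * |x j| ^ q) + (1 - l) * (κ j * |y j| ^ q) < κ j * |α j| ^ q := by
    intro j hne_j
    have hsc : l • (x j) ^ q + (1 - l) • (y j) ^ q < (l • x j + (1 - l) • y j) ^ q :=
      (Real.strictConcaveOn_rpow hq0 hq1).2 (Set.mem_Ici.2 (hx j))
        (Set.mem_Ici.2 (hy j)) hne_j hl0 (by linarith) (by ring)
    simp only [smul_eq_mul] at hsc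
    have habs : |α j| = l * x j + (1 - l) * y j := by
      rw [hα j, abs_of_nonneg]
      have := mul_nonneg hl0.le (hx j)
      have := mul_nonneg (by linarith : (0:ℝ) ≤ 1 - l) (hy j)
      linarith
    calc l * (κ j * |x j| ^ q) + (1 - l) * (κ j * |y j| ^ q)
        = κ j * (l * |x j| ^ q + (1 - l) * |y j| ^ q) := by ring
      _ < κ j * |α j| ^ q := by
          apply mul_lt_mul_of_pos_left _ (hκ j)
          rw [habs, abs_of_nonneg (hx j), abs_of_nonneg (hy j)]
          exact hsc
  have hle : ∀ j ∈ Finset.univ,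
      l * (κ j * |x j| ^ q) + (1 - l) * (κ j * |y j| ^ q) ≤ κ j * |α j| ^ q := by
    intro j _
    by_cases hj : x j = y j
    · have hxa : α j = x j := by rw [hα j, hj]; ring
      rw [hxa, hj]; ring_nf; exact le_refl _
    · exact (key j hj).le
  have := Finset.sum_lt_sum hle ⟨j₀, Finset.mem_univ j₀, key j₀ hj₀⟩
  calc l * Pe a q κ x + (1 - l) * Pe a q κ y
      = ∑ j, (l * (κ j * |x j| ^ q) + (1 - l) * (κ j * |y j| ^ q)) := by
        unfold Pe
        rw [Finset.sum_add_distrib, Finset.mul_sum, Finset.mul_sum]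
    _ < ∑ j, κ j * |α j| ^ q := this
    _ = Pe a q κ α := rfl

lemma move_to_zero (a r : ℕ) (A : Matrix (Fin a) (Fin r) ℝ) (αstar : Fin a → ℝ)
    (α : Fin a → ℝ) (hα : ∀ j, 0 ≤ α j) (hker : α - αstar ∈ kerRow a r A)
    (d : Fin a → ℝ) (hd : d ∈ kerRow a r A) (hdsupp : ∀ j, α j = 0 → d j = 0)
    (j₁ : Fin a) (hdneg : d j₁ < 0) :
    ∃ t : ℝ, 0 < t ∧ (∀ j, 0 ≤ α j + t * d j) ∧
      ((fun j => α j + t * d j) - αstar ∈ kerRow a r A) ∧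
      (∀ j, α j = 0 → α j + t * d j = 0) ∧ (∃ j, α j ≠ 0 ∧ α j + t * d j = 0) := by
  classical
  set N : Finset (Fin a) := Finset.univ.filter (fun j => d j < 0) with hN
  have hj₁N : j₁ ∈ N := by simp [hN, hdneg]
  obtain ⟨j₀, hj₀N, hmin⟩ := N.exists_min_image (fun j => α j / (-d j)) ⟨j₁, hj₁N⟩
  have hd₀ : d j₀ < 0 := by simpa [hN] using hj₀N
  have hα₀ : 0 < α j₀ := by
    rcases (hα j₀).lt_or_eq with h | h
    · exact h
    · exact absurd (hdsupp j₀ h.symm) (ne_of_lt hd₀)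
  refine ⟨α j₀ / (-d j₀), div_pos hα₀ (by linarith), ?_, ?_, ?_, ?_⟩
  · intro j
    by_cases hdj : d j < 0
    · have h1 : α j₀ / (-d j₀) ≤ α j / (-d j) := hmin j (by simp [hN, hdj])
      have h2 : α j₀ / (-d j₀) * (-d j) ≤ α j :=
        (le_div_iff₀ (by linarith : (0:ℝ) < -d j)).1 h1
      nlinarith
    · push_neg at hdj
      have := mul_nonneg (div_pos hα₀ (by linarith : (0:ℝ) < -d j₀)).le hdj
      linarith [hα j]
  · have heq : (fun j => α j + α j₀ / (-d j₀) * d j) - αstar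
        = (α - αstar) + (α j₀ / (-d j₀)) • d := by
      funext j; simp; ring
    rw [heq]
    exact Submodule.add_mem _ hker (Submodule.smul_mem _ _ hd)
  · intro j hj
    rw [hj, hdsupp j hj]; ring
  · refine ⟨j₀, ne_of_gt hα₀, ?_⟩
    have hne : d j₀ ≠ 0 := ne_of_lt hd₀
    have h3 : α j₀ / -d j₀ * d j₀ = -α j₀ := by
      rw [div_neg, neg_mul, div_mul_cancel₀ _ hne]
    linarith

lemma descent (a r : ℕ) (A : Matrix (Fin a) (Fin r) ℝ) (q : ℝ) (hq0 : 0 < q) (hq1 : q < 1)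
    (κ : Fin a → ℝ) (hκ : ∀ j, 0 < κ j) (αstar : Fin a → ℝ)
    (α : Fin a → ℝ) (hα : ∀ j, 0 ≤ α j) (hker : α - αstar ∈ kerRow a r A)
    (d : Fin a → ℝ) (hd : d ∈ kerRow a r A) (hdsupp : ∀ j, α j = 0 → d j = 0)
    (j₁ : Fin a) (hdneg : d j₁ < 0) :
    ∃ β : Fin a → ℝ, (∀ j, 0 ≤ β j) ∧ β - αstar ∈ kerRow a r A ∧
      (∀ j, α j = 0 → β j = 0) ∧ (∃ j, α j ≠ 0 ∧ β j = 0) ∧ Pe a q κ β < Pe a q κ α := by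
  classical
  obtain ⟨t, ht, hw0, hwker, hwz, hwnew⟩ :=
    move_to_zero a r A αstar α hα hker d hd hdsupp j₁ hdneg
  set w : Fin a → ℝ := fun j => α j + t * d j with hwdef
  have hdj₁ : d j₁ ≠ 0 := ne_of_lt hdneg
  by_cases hpos : ∃ j, 0 < d j
  · -- two finite endpoints
    obtain ⟨j₂, hj₂⟩ := hpos
    obtain ⟨t', ht', hu0, huker, huz, hunew⟩ :=
      move_to_zero a r A αstar α hα hker (-d) (Submodule.neg_mem _ hd)
        (fun j hj => by simp [hdsupp j hj]) j₂ (by simpa using hj₂)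
    set u : Fin a → ℝ := fun j => α j + t' * (-d) j with hudef
    have hts : 0 < t + t' := by linarith
    set l : ℝ := t / (t + t') with hldef
    have hl0 : 0 < l := div_pos ht hts
    have hl1 : l < 1 := (div_lt_one hts).2 (by linarith)
    have hαcomb : ∀ j, α j = l * u j + (1 - l) * w j := by
      intro j
      simp only [hudef, hwdef, hldef, Pi.neg_apply]
      field_simp
      ring
    have hune : u ≠ w := by
      intro h
      have := congrFun h j₁
      simp only [hudef, hwdef, Pi.neg_apply] at this
      have : (t + t') * d j₁ = 0 := by linarith
      exact hdj₁ (by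
        rcases mul_eq_zero.1 this with h' | h'
        · exact absurd h' (ne_of_gt hts)
        · exact h')
    have hkey := pe_concave a q hq0 hq1 κ hκ u w α hu0 hw0 hune l hl0 hl1 hαcomb
    by_cases hcase : Pe a q κ u < Pe a q κ α
    · exact ⟨u, hu0, huker, huz, hunew, hcase⟩
    · refine ⟨w, hw0, hwker, hwz, hwnew, ?_⟩
      push_neg at hcase
      have h1l : (0:ℝ) < 1 - l := by linarith
      have h2 : l * Pe a q κ α ≤ l * Pe a q κ u := mul_le_mul_of_nonneg_left hcase hl0.le
      have h3 : (1 - l) * Pe a q κ w < (1 - l) * Pe a q κ α := by linarith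
      exact lt_of_mul_lt_mul_left h3 h1l.le
  · -- d ≤ 0 everywhere; go far in the -d direction
    push_neg at hpos
    have hPeα0 : 0 ≤ Pe a q κ α := Pe_nonneg a q κ hκ α
    set C : ℝ := (Pe a q κ α / κ j₁) ^ (1/q) + 1 with hCdef
    have hbase : (0:ℝ) ≤ Pe a q κ α / κ j₁ := div_nonneg hPeα0 (hκ j₁).le
    have hC1 : (Pe a q κ α / κ j₁) ^ (1/q) ≤ C - 1 := by simp [hCdef]
    have hC0 : 0 < C := by
      have := Real.rpow_nonneg hbase (1/q)
      simp only [hCdef]; linarith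
    set s : ℝ := C / d j₁ with hsdef
    have hs0 : s < 0 := div_neg_of_pos_of_neg hC0 hdneg
    set u : Fin a → ℝ := fun j => α j + s * d j with hudef
    have hu0 : ∀ j, 0 ≤ u j := by
      intro j
      have : 0 ≤ s * d j := mul_nonneg_of_nonpos_of_nonpos hs0.le (hpos j)
      simp only [hudef]; linarith [hα j]
    have huj₁ : u j₁ = α j₁ + C := by
      simp only [hudef, hsdef]
      rw [div_mul_cancel₀ _ hdj₁]
    have hPeu : Pe a q κ α ≤ Pe a q κ u := by
      have h1 : κ j₁ * |u j₁| ^ q ≤ Pe a q κ u :=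
        Finset.single_le_sum (f := fun j => κ j * |u j| ^ q)
          (fun j _ => mul_nonneg (hκ j).le (Real.rpow_nonneg (abs_nonneg _) q))
          (Finset.mem_univ j₁)
      have hCval : ((Pe a q κ α / κ j₁) ^ (1/q)) ^ q = Pe a q κ α / κ j₁ := by
        rw [← Real.rpow_mul hbase, one_div, inv_mul_cancel₀ (ne_of_gt hq0), Real.rpow_one]
      have h2 : Pe a q κ α ≤ κ j₁ * |u j₁| ^ q := by
        have huC : (Pe a q κ α / κ j₁) ^ (1/q) ≤ u j₁ := by
          rw [huj₁]; linarith [hα j₁, hC1]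
        have hmono : ((Pe a q κ α / κ j₁) ^ (1/q)) ^ q ≤ (u j₁) ^ q :=
          Real.rpow_le_rpow (Real.rpow_nonneg hbase _) huC hq0.le
        rw [hCval] at hmono
        rw [abs_of_nonneg (hu0 j₁)]
        calc Pe a q κ α = κ j₁ * (Pe a q κ α / κ j₁) := by
              rw [mul_div_cancel₀ _ (ne_of_gt (hκ j₁))]
          _ ≤ κ j₁ * u j₁ ^ q := mul_le_mul_of_nonneg_left hmono (hκ j₁).le
      exact le_trans h2 h1
    have hts : 0 < t - s := by linarith
    have htsne : t - s ≠ 0 := ne_of_gt hts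
    set l : ℝ := t / (t - s) with hldef
    have hl0 : 0 < l := div_pos ht hts
    have hl1 : l < 1 := (div_lt_one hts).2 (by linarith)
    have hαcomb : ∀ j, α j = l * u j + (1 - l) * w j := by
      intro j
      simp only [hudef, hwdef, hldef]
      field_simp
      ring
    have hune : u ≠ w := by
      intro h
      have := congrFun h j₁
      simp only [hudef, hwdef] at this
      have h4 : (t - s) * d j₁ = 0 := by linarith
      rcases mul_eq_zero.1 h4 with h' | h'
      · exact htsne h'
      · exact hdj₁ h'
    have hkey := pe_concave a q hq0 hq1 κ hκ u w α hu0 hw0 hune l hl0 hl1 hαcomb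
    refine ⟨w, hw0, hwker, hwz, hwnew, ?_⟩
    have h1l : (0:ℝ) < 1 - l := by linarith
    have h2 : l * Pe a q κ α ≤ l * Pe a q κ u := mul_le_mul_of_nonneg_left hPeu hl0.le
    have h3 : (1 - l) * Pe a q κ w < (1 - l) * Pe a q κ α := by linarith
    exact lt_of_mul_lt_mul_left h3 h1l.le

lemma key_min (a r : ℕ) (ha : 0 < a) (A : Matrix (Fin a) (Fin r) ℝ)
    (hW : Module.finrank ℝ (kerRow a r A) = a - r) (h2r : a - r + (a - r) = a)
    (q : ℝ) (hq0 : 0 < q) (hq1 : q < 1) (κ : Fin a → ℝ) (hκ : ∀ j, 0 < κ j)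
    (αstar z₀ : Fin a → ℝ)
    (hminsharp : ∀ z : Fin a → ℝ,
      (∃ E : Finset (Fin a), E.card = a - r ∧ IsCompl (spanStd a E) (kerRow a r A) ∧
          z ∈ spanStd a E ∧ αstar - z ∈ kerRow a r A) →
      (∀ j, 0 ≤ z j) → z ≠ z₀ → Pe a q κ z₀ < Pe a q κ z) :
    ∀ n : ℕ, ∀ α : Fin a → ℝ, (Finset.univ.filter fun j => α j ≠ 0).card ≤ n →
      (∀ j, 0 ≤ α j) → α - αstar ∈ kerRow a r A → α ≠ z₀ →
      Pe a q κ z₀ < Pe a q κ α := by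
  classical
  intro n
  induction n using Nat.strong_induction_on with
  | _ n IH =>
  intro α hcard hα hker hne
  by_cases hex : ∃ d ∈ kerRow a r A, d ≠ 0 ∧ ∀ j, α j = 0 → d j = 0
  · obtain ⟨d, hd, hdne, hdsupp⟩ := hex
    obtain ⟨j₁, hj₁⟩ : ∃ j, d j ≠ 0 := by
      by_contra h; push_neg at h; exact hdne (funext h)
    have hstep : ∃ β : Fin a → ℝ, (∀ j, 0 ≤ β j) ∧ β - αstar ∈ kerRow a r A ∧
        (∀ j, α j = 0 → β j = 0) ∧ (∃ j, α j ≠ 0 ∧ β j = 0) ∧ Pe a q κ β < Pe a q κ α := by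
      rcases lt_or_gt_of_ne hj₁ with h | h
      · exact descent a r A q hq0 hq1 κ hκ αstar α hα hker d hd hdsupp j₁ h
      · exact descent a r A q hq0 hq1 κ hκ αstar α hα hker (-d) (Submodule.neg_mem _ hd)
          (fun j hj => by simp [hdsupp j hj]) j₁ (by simpa using h)
    obtain ⟨β, hβ0, hβker, hβz, ⟨j₂, hj₂ne, hj₂z⟩, hβlt⟩ := hstep
    have hsubset : (Finset.univ.filter fun j => β j ≠ 0) ⊆
        (Finset.univ.filter fun j => α j ≠ 0) := by
      intro j hj
      simp only [Finset.mem_filter, Finset.mem_univ, true_and] at *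
      intro h0
      exact hj (hβz j h0)
    have hssub : (Finset.univ.filter fun j => β j ≠ 0) ⊂
        (Finset.univ.filter fun j => α j ≠ 0) :=
      (Finset.ssubset_iff_of_subset hsubset).2
        ⟨j₂, by simp [hj₂ne], by simp [hj₂z]⟩
    have hcardlt : (Finset.univ.filter fun j => β j ≠ 0).card < n :=
      lt_of_lt_of_le (Finset.card_lt_card hssub) hcard
    by_cases hβz₀ : β = z₀
    · exact hβz₀ ▸ hβlt
    · exact lt_trans (IH _ hcardlt β le_rfl hβ0 hβker hβz₀) hβlt
  · push_neg at hex
    have hdisj : Disjoint (spanStd a (Finset.univ.filter fun j => α j ≠ 0)) (kerRow a r A) := by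
      rw [Submodule.disjoint_def]
      intro x hxS hxK
      by_contra hx0
      obtain ⟨j, hj0, hjne⟩ := hex x hxK hx0
      exact hjne (mem_spanStd.1 hxS j (by simp [hj0]))
    obtain ⟨E, hSE, hEcard, hEcompl⟩ := extend_lemma a r ha A hW h2r _ hdisj
    refine hminsharp α ⟨E, hEcard, hEcompl, ?_, ?_⟩ hα hne
    · refine mem_spanStd.2 (fun j hj => ?_)
      by_contra h
      exact hj (hSE j (by simp [h]))
    · rw [show αstar - α = -(α - αstar) from (neg_sub α αstar).symm]
      exact Submodule.neg_mem _ hker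


/-- Proposition 5.1 of the paper. Assume `[L1]#`: there are `E₀ ∈ ℰ` and
`z₀ = pr_{E₀}(α*)` (characterized by `z₀ ∈ span{e_j : j ∈ E₀}` and `α* − z₀ ∈ Ker A`)
with `z₀ ∈ [0, M_α)^a`, such that `z₀` is the unique minimizer of `Pe` on the set
`{pr_E(α*) : E ∈ ℰ} ∩ [0,∞)^a`. Then `[L1]` holds with `α** = z₀`: `z₀` lies in
`(α* + Ker A) ∩ [0,M_α)^a` and is the unique minimizer of `Pe` on
`(α* + Ker A) ∩ [0,M_α]^a`. -/
theorem stmt6 (a r : ℕ) (hra : r < a)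
    (A : Matrix (Fin a) (Fin r) ℝ) (hrank : A.rank = r)
    (q : ℝ) (hq0 : 0 < q) (hq1 : q < 1) (κ : Fin a → ℝ) (hκ : ∀ j, 0 < κ j)
    (αstar : Fin a → ℝ) (hαstar : ∀ j, 0 ≤ αstar j) (Mα : ℝ) (hMα : 0 < Mα)
    (E₀ : Finset (Fin a)) (z₀ : Fin a → ℝ)
    (hE₀ : E₀.card = a - r ∧ IsCompl (spanStd a E₀) (kerRow a r A))
    (hz₀pr : z₀ ∈ spanStd a E₀ ∧ αstar - z₀ ∈ kerRow a r A)
    (hz₀box : ∀ j, 0 ≤ z₀ j ∧ z₀ j < Mα)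
    (hminsharp : ∀ z : Fin a → ℝ,
      (∃ E : Finset (Fin a), E.card = a - r ∧ IsCompl (spanStd a E) (kerRow a r A) ∧
          z ∈ spanStd a E ∧ αstar - z ∈ kerRow a r A) →
      (∀ j, 0 ≤ z j) → z ≠ z₀ →
      ∑ j, κ j * |z₀ j| ^ q < ∑ j, κ j * |z j| ^ q) :
    (z₀ - αstar ∈ kerRow a r A ∧ ∀ j, 0 ≤ z₀ j ∧ z₀ j < Mα) ∧
      ∀ α : Fin a → ℝ, α - αstar ∈ kerRow a r A → (∀ j, 0 ≤ α j ∧ α j ≤ Mα) → α ≠ z₀ →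
        ∑ j, κ j * |z₀ j| ^ q < ∑ j, κ j * |α j| ^ q := by
  have ha : 0 < a := lt_of_le_of_lt (Nat.zero_le r) hra
  have hfra : Module.finrank ℝ (Fin a → ℝ) = a := by
    simp [Module.finrank_fintype_fun_eq_card]
  have hW : Module.finrank ℝ (kerRow a r A) = a - r := by
    have h1 := LinearMap.finrank_range_add_finrank_ker (A.vecMulLinear)
    have h2 : Module.finrank ℝ (LinearMap.range A.vecMulLinear) = r := by
      rw [← Matrix.mulVecLin_transpose]
      have h4 : Module.finrank ℝ (LinearMap.range A.transpose.mulVecLin) = A.transpose.rank := rfl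
      rw [h4, Matrix.rank_transpose, hrank]
    rw [h2, hfra] at h1
    unfold kerRow
    omega
  have h2r : a - r + (a - r) = a := by
    have h3 := Submodule.finrank_add_eq_of_isCompl hE₀.2
    rw [finrank_spanStd, hE₀.1, hW, hfra] at h3
    exact h3
  constructor
  · refine ⟨?_, hz₀box⟩
    rw [show z₀ - αstar = -(αstar - z₀) from (neg_sub αstar z₀).symm]
    exact Submodule.neg_mem _ hz₀pr.2
  · intro α hker hbox hne
    have := key_min a r ha A hW h2r q hq0 hq1 κ hκ αstar z₀
      (fun z hz h0 hzne => hminsharp z hz h0 hzne)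
      (Finset.univ.filter fun j => α j ≠ 0).card α le_rfl (fun j => (hbox j).1) hker hne
    exact this
end

section
/- Let M > 0. There exists a constant C₁ > 0, depending only on the family {p_j}_{j∈𝒥} and on M, such that for every δ with 0 < δ < min(δ₀/(4M), 1), every x₀ ∈ ℝ∖{0} with |x₀| ≤ M, every j ∈ 𝒥, and every x ∈ ℝ with |x| ≤ M and |x − x₀| < δ|x₀|, one has p_j(x) ≥ (1 − C₁δ) p_j(x₀). (The inequality also holds trivially for x₀ = 0 and arbitrary x, since p_j(0) = 0.) -/
set_option maxHeartbeats 1600000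


/-- Lemma 6.1 of the paper. Let `{p_j}_{j∈𝒥}` be a finite family of
continuous penalty functions with `p_j ≥ 0`, `p_j` of class `C¹` on `ℝ∖{0}`,
`p_j(x) = 0 ↔ x = 0`, and `p_j(x) = |x|^{q_j}` (`0 < q_j ≤ 1`) for `|x| ≤ δ₀`.
Then for every `M > 0` there is a constant `C₁ > 0`, depending only on the family and `M`,
such that for all `0 < δ < min (δ₀/(4M)) 1`, all `x₀ ≠ 0` with `|x₀| ≤ M`, all `j`, and
all `x` with `|x| ≤ M`, `|x − x₀| < δ|x₀|`, one has `p_j(x) ≥ (1 − C₁ δ) p_j(x₀)`. -/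
theorem stmt7 (J : Type) [Fintype J]
    (p : J → ℝ → ℝ) (δ₀ : ℝ) (hδ₀ : 0 < δ₀) (q : J → ℝ)
    (hcont : ∀ j, Continuous (p j)) (hnn : ∀ j x, 0 ≤ p j x)
    (hC1 : ∀ j, ContDiffOn ℝ 1 (p j) {(0 : ℝ)}ᶜ)
    (hzero : ∀ j x, p j x = 0 ↔ x = 0)
    (hq : ∀ j, 0 < q j ∧ q j ≤ 1)
    (hpow : ∀ j, ∀ x : ℝ, |x| ≤ δ₀ → p j x = |x| ^ (q j))
    (M : ℝ) (hM : 0 < M) :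
    ∃ C₁ > (0 : ℝ), ∀ δ : ℝ, 0 < δ → δ < min (δ₀ / (4 * M)) 1 →
      ∀ x₀ : ℝ, x₀ ≠ 0 → |x₀| ≤ M → ∀ j, ∀ x : ℝ, |x| ≤ M → |x - x₀| < δ * |x₀| →
        (1 - C₁ * δ) * p j x₀ ≤ p j x := by
  have key : ∀ j : J, ∃ Cj : ℝ, 0 ≤ Cj ∧ ∀ δ : ℝ, 0 < δ → δ < min (δ₀ / (4 * M)) 1 →
      ∀ x₀ : ℝ, x₀ ≠ 0 → |x₀| ≤ M → δ₀ / 2 < |x₀| → ∀ x : ℝ, |x| ≤ M →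
        |x - x₀| < δ * |x₀| → p j x₀ - Cj * δ * p j x₀ ≤ p j x := by
    intro j
    -- the compact set where everything lives
    set K : Set ℝ := Set.Icc (-M) M ∩ {y : ℝ | δ₀ / 4 ≤ |y|} with hKdef
    have hKclosed : IsClosed {y : ℝ | δ₀ / 4 ≤ |y|} :=
      isClosed_le continuous_const continuous_abs
    have hKc : IsCompact K := isCompact_Icc.inter_right hKclosed
    have hKsub : K ⊆ {(0 : ℝ)}ᶜ := by
      intro y hy
      have : δ₀ / 4 ≤ |y| := hy.2
      simp only [Set.mem_compl_iff, Set.mem_singleton_iff]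
      intro h; rw [h] at this; simp at this; linarith
    -- derivative bound on K
    have hdc : ContinuousOn (deriv (p j)) {(0 : ℝ)}ᶜ :=
      (hC1 j).continuousOn_deriv_of_isOpen isOpen_compl_singleton le_rfl
    obtain ⟨L, hL⟩ := hKc.exists_bound_of_continuousOn (hdc.mono hKsub)
    set L' : ℝ := max L 0 with hL'def
    have hL'0 : 0 ≤ L' := le_max_right _ _
    have hL' : ∀ y ∈ K, ‖deriv (p j) y‖ ≤ L' := fun y hy => (hL y hy).trans (le_max_left _ _)
    -- lower bound m for p j on K'
    set K' : Set ℝ := Set.Icc (-M) M ∩ {y : ℝ | δ₀ / 2 ≤ |y|} with hK'def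
    have hK'c : IsCompact K' :=
      isCompact_Icc.inter_right (isClosed_le continuous_const continuous_abs)
    have hmex : ∃ m : ℝ, 0 < m ∧ ∀ y ∈ K', m ≤ p j y := by
      by_cases hne : K'.Nonempty
      · obtain ⟨z, hz, hzmin⟩ := hK'c.exists_isMinOn hne (hcont j).continuousOn
        refine ⟨p j z, ?_, fun y hy => hzmin hy⟩
        rcases lt_or_eq_of_le (hnn j z) with h | h
        · exact h
        · exfalso
          have hz0 : z = 0 := (hzero j z).1 h.symm
          have : δ₀ / 2 ≤ |z| := hz.2
          rw [hz0] at this; simp at this; linarith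
      · exact ⟨1, one_pos, fun y hy => absurd ⟨y, hy⟩ hne⟩
    obtain ⟨m, hm0, hm⟩ := hmex
    refine ⟨L' * M / m, by positivity, ?_⟩
    intro δ hδ hδlt x₀ hx₀ hx₀M hx₀big x hxM hxx₀
    have hδ1 : δ < 1 := lt_of_lt_of_le hδlt (min_le_right _ _)
    have hδM : δ < δ₀ / (4 * M) := lt_of_lt_of_le hδlt (min_le_left _ _)
    have hx₀pos : 0 < |x₀| := abs_pos.2 hx₀
    have hδx₀ : δ * |x₀| < δ₀ / 4 := by
      calc δ * |x₀| ≤ δ * M := by nlinarith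
        _ < δ₀ / 4 := by
          have := (lt_div_iff₀ (by positivity : (0:ℝ) < 4 * M)).1 hδM
          nlinarith
    have hxbig : δ₀ / 4 < |x| := by
      have : |x₀| - |x| ≤ |x - x₀| := by
        have := abs_sub_abs_le_abs_sub x₀ x
        rw [abs_sub_comm] at this
        linarith
      nlinarith
    have hxK : x ∈ K := ⟨by rw [Set.mem_Icc]; constructor <;> cases abs_le.1 hxM <;> linarith,
      le_of_lt hxbig⟩
    have hx₀K : x₀ ∈ K := ⟨by rw [Set.mem_Icc]; constructor <;> cases abs_le.1 hx₀M <;> linarith,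
      by simp only [Set.mem_setOf_eq]; linarith⟩
    have hx₀K' : x₀ ∈ K' := ⟨hx₀K.1, le_of_lt hx₀big⟩
    -- x and x₀ have the same sign; segment stays in K
    have hseg : Set.uIcc x₀ x ⊆ K := by
      intro y hy
      rw [Set.mem_uIcc] at hy
      have habs : |x - x₀| < |x₀| := lt_of_lt_of_le hxx₀ (by nlinarith)
      constructor
      · rw [Set.mem_Icc]
        rcases hy with ⟨h1, h2⟩ | ⟨h1, h2⟩ <;>
          cases abs_le.1 hxM <;> cases abs_le.1 hx₀M <;> constructor <;> linarith
      · show δ₀ / 4 ≤ |y|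
        rcases lt_or_gt_of_ne hx₀ with hneg | hpos
        · -- x₀ < 0, so x < 0
          have hxneg : x < 0 := by
            have : |x₀| = -x₀ := abs_of_neg hneg
            cases abs_lt.1 habs; linarith
          have hx' : x ≤ -(δ₀/4) := by
            have : |x| = -x := abs_of_neg hxneg
            linarith
          have hx₀' : x₀ ≤ -(δ₀/4) := by
            have : |x₀| = -x₀ := abs_of_neg hneg
            linarith
          have hy' : y ≤ -(δ₀/4) := by rcases hy with ⟨_, h2⟩ | ⟨_, h2⟩ <;> linarith
          calc δ₀ / 4 ≤ -y := by linarith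
            _ ≤ |y| := neg_le_abs y
        · -- x₀ > 0, so x > 0
          have hxpos : 0 < x := by
            have : |x₀| = x₀ := abs_of_pos hpos
            cases abs_lt.1 habs; linarith
          have hx' : δ₀/4 ≤ x := by
            have : |x| = x := abs_of_pos hxpos
            linarith
          have hx₀' : δ₀/4 ≤ x₀ := by
            have : |x₀| = x₀ := abs_of_pos hpos
            linarith
          have hy' : δ₀/4 ≤ y := by rcases hy with ⟨h1, _⟩ | ⟨h1, _⟩ <;> linarith
          exact hy'.trans (le_abs_self y)
    -- mean value inequality on the segment
    have hdiff : ∀ y ∈ Set.uIcc x₀ x, HasDerivWithinAt (p j) (deriv (p j) y) (Set.uIcc x₀ x) y := by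
      intro y hy
      have hy0 : y ∈ ({(0 : ℝ)}ᶜ : Set ℝ) := hKsub (hseg hy)
      have : DifferentiableAt ℝ (p j) y := by
        have := ((hC1 j).differentiableOn one_ne_zero) y hy0
        exact this.differentiableAt (isOpen_compl_singleton.mem_nhds hy0)
      exact this.hasDerivAt.hasDerivWithinAt
    have hmvt : ‖p j x - p j x₀‖ ≤ L' * ‖x - x₀‖ :=
      Convex.norm_image_sub_le_of_norm_hasDerivWithin_le hdiff
        (fun y hy => hL' y (hseg hy)) (convex_uIcc x₀ x) Set.left_mem_uIcc Set.right_mem_uIcc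
    rw [Real.norm_eq_abs, Real.norm_eq_abs] at hmvt
    have h1 : p j x₀ - p j x ≤ L' * |x - x₀| := by
      have := neg_abs_le (p j x - p j x₀)
      linarith
    have h2 : L' * |x - x₀| ≤ L' * (δ * M) := by
      have : |x - x₀| ≤ δ * M := le_of_lt (lt_of_lt_of_le hxx₀ (by nlinarith))
      nlinarith
    have hpm : m ≤ p j x₀ := hm x₀ hx₀K'
    have hc : L' * M = (L' * M / m) * m := by field_simp
    have h3 : (L' * M / m * δ) * m ≤ (L' * M / m * δ) * p j x₀ :=
      mul_le_mul_of_nonneg_left hpm (by positivity)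
    nlinarith
  choose C hC0 hC using key
  obtain ⟨C₁, hC₁1, hC₁jall⟩ : ∃ C₁ : ℝ, 1 ≤ C₁ ∧ ∀ j, C j ≤ C₁ := by
    refine ⟨1 + ∑ j, C j, ?_, fun j => ?_⟩
    · have : 0 ≤ ∑ j, C j := Finset.sum_nonneg fun j _ => hC0 j
      linarith
    · have : C j ≤ ∑ i, C i :=
        Finset.single_le_sum (fun i _ => hC0 i) (Finset.mem_univ j)
      linarith
  refine ⟨C₁, by linarith, ?_⟩
  intro δ hδ hδlt x₀ hx₀ hx₀M j x hxM hxx₀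
  have hC₁j : C j ≤ C₁ := hC₁jall j
  have hδ1 : δ < 1 := lt_of_lt_of_le hδlt (min_le_right _ _)
  have hx₀pos : 0 < |x₀| := abs_pos.2 hx₀
  by_cases hcase : |x₀| ≤ δ₀ / 2
  · -- small x₀: power regime
    have hpx₀ : p j x₀ = |x₀| ^ (q j) := hpow j x₀ (by linarith)
    have hxd : |x| ≤ δ₀ := by
      have : |x| - |x₀| ≤ |x - x₀| := by
        have := abs_sub_abs_le_abs_sub x x₀; linarith
      nlinarith
    have hpx : p j x = |x| ^ (q j) := hpow j x hxd
    rcases le_or_gt (1 - C₁ * δ) 0 with hneg | hposc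
    · calc (1 - C₁ * δ) * p j x₀ ≤ 0 := mul_nonpos_of_nonpos_of_nonneg hneg (hnn j x₀)
        _ ≤ p j x := hnn j x
    · have hxlow : (1 - δ) * |x₀| ≤ |x| := by
        have : |x₀| - |x| ≤ |x - x₀| := by
          have := abs_sub_abs_le_abs_sub x₀ x
          rw [abs_sub_comm] at this; linarith
        nlinarith
      have hq0 := (hq j).1
      have hq1 := (hq j).2
      have h1δ : 0 < 1 - δ := by linarith
      calc (1 - C₁ * δ) * p j x₀ ≤ (1 - δ) * |x₀| ^ (q j) := by
            rw [hpx₀]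
            have hb : (0 : ℝ) ≤ |x₀| ^ (q j) := Real.rpow_nonneg (abs_nonneg _) _
            have : 1 - C₁ * δ ≤ 1 - δ := by nlinarith
            nlinarith
        _ ≤ (1 - δ) ^ (q j) * |x₀| ^ (q j) := by
            have hb : (0 : ℝ) ≤ |x₀| ^ (q j) := Real.rpow_nonneg (abs_nonneg _) _
            have : (1 - δ) ≤ (1 - δ) ^ (q j) := by
              calc (1 - δ) = (1 - δ) ^ (1 : ℝ) := (Real.rpow_one _).symm
                _ ≤ (1 - δ) ^ (q j) :=
                  Real.rpow_le_rpow_of_exponent_ge h1δ (by linarith) hq1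
            nlinarith
        _ = ((1 - δ) * |x₀|) ^ (q j) := (Real.mul_rpow (le_of_lt h1δ) (abs_nonneg _)).symm
        _ ≤ |x| ^ (q j) := Real.rpow_le_rpow (by positivity) hxlow (le_of_lt hq0)
        _ = p j x := hpx.symm
  · -- large x₀: Lipschitz regime
    push_neg at hcase
    have := hC j δ hδ hδlt x₀ hx₀ hx₀M hcase x hxM hxx₀
    have hpx₀nn := hnn j x₀
    have hmul : C j * δ * p j x₀ ≤ C₁ * δ * p j x₀ :=
      mul_le_mul_of_nonneg_right (mul_le_mul_of_nonneg_right hC₁j hδ.le) hpx₀nn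
    have : (1 - C₁ * δ) * p j x₀ ≤ p j x₀ - C j * δ * p j x₀ := by ring_nf; ring_nf at hmul; linarith
    linarith [hC j δ hδ hδlt x₀ hx₀ hx₀M hcase x hxM hxx₀]
end

section
/- Suppose that the family {sup_{γ∈G} |f(X_t, γ)|}_{t≥0} is uniformly integrable. Then E[ sup_{γ∈G} | (1/T)∫₀^T f(X_t, γ) dt − ∫ f(x, γ) ν(dx) | ] → 0 as T → ∞; that is, the time averages of f(X_t, ·) converge to the ν-averages uniformly in γ ∈ G, in L¹(P). -/
open MeasureTheory Filter Topology
set_option linter.unusedSectionVars false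
set_option linter.unusedVariables false
set_option maxHeartbeats 1000000

namespace Stmt8Aux

lemma euclid_norm_le_sum {m : ℕ} (v : EuclideanSpace ℝ (Fin m)) : ‖v‖ ≤ ∑ j, |v j| := by
  rw [EuclideanSpace.norm_eq]
  have h : ∑ j, ‖v j‖ ^ 2 ≤ (∑ j, ‖v j‖) ^ 2 :=
    Finset.sum_sq_le_sq_sum_of_nonneg (fun i _ => norm_nonneg _)
  calc Real.sqrt (∑ j, ‖v j‖ ^ 2) ≤ Real.sqrt ((∑ j, ‖v j‖) ^ 2) := Real.sqrt_le_sqrt h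
    _ = ∑ j, ‖v j‖ := Real.sqrt_sq (by positivity)
    _ = ∑ j, |v j| := by simp [Real.norm_eq_abs]

variable {Γ : Type*} [MetricSpace Γ] [SecondCountableTopology Γ]

lemma exists_seq_dense_subset {s : Set Γ} (hs : s.Nonempty) :
    ∃ u : ℕ → Γ, (∀ n, u n ∈ s) ∧ s ⊆ closure (Set.range u) := by
  obtain ⟨t, htc, htd⟩ := TopologicalSpace.exists_countable_dense s
  have hc : (Subtype.val '' t ∪ {hs.some} : Set Γ).Countable :=
    (htc.image _).union (Set.countable_singleton _)
  have hne : (Subtype.val '' t ∪ {hs.some} : Set Γ).Nonempty :=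
    ⟨hs.some, Set.mem_union_right _ rfl⟩
  obtain ⟨u, hu⟩ := hc.exists_eq_range hne
  refine ⟨u, ?_, ?_⟩
  · intro n
    have hmem : u n ∈ Subtype.val '' t ∪ {hs.some} := by rw [hu]; exact ⟨n, rfl⟩
    rcases hmem with ⟨⟨γ, hγ⟩, _, rfl⟩ | h
    · exact hγ
    · rw [Set.mem_singleton_iff] at h; rw [h]; exact hs.some_mem
  · intro x hx
    have h1 : (⟨x, hx⟩ : s) ∈ closure t := by rw [htd.closure_eq]; trivial
    have h2 : x ∈ closure (Subtype.val '' t) :=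
      (image_closure_subset_closure_image continuous_subtype_val)
        (Set.mem_image_of_mem Subtype.val h1)
    rw [← hu]
    exact closure_mono Set.subset_union_left h2

lemma biSup_le {g : Γ → ℝ} {s : Set Γ} {C : ℝ} (hC : 0 ≤ C) (hb : ∀ γ ∈ s, g γ ≤ C) :
    (⨆ γ, ⨆ _ : γ ∈ s, g γ) ≤ C :=
  Real.iSup_le (fun γ => Real.iSup_le (fun hγ => hb γ hγ) hC) hC

lemma biSup_nonneg {g : Γ → ℝ} {s : Set Γ} (h0 : ∀ γ, 0 ≤ g γ) :
    0 ≤ ⨆ γ, ⨆ _ : γ ∈ s, g γ :=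
  Real.iSup_nonneg fun γ => Real.iSup_nonneg fun _ => h0 γ

lemma le_biSup {g : Γ → ℝ} {s : Set Γ} {C : ℝ} (hC : 0 ≤ C) (hb : ∀ γ ∈ s, g γ ≤ C)
    {γ₀ : Γ} (hγ₀ : γ₀ ∈ s) : g γ₀ ≤ ⨆ γ, ⨆ _ : γ ∈ s, g γ := by
  have h1 : g γ₀ ≤ ⨆ _ : γ₀ ∈ s, g γ₀ := by
    haveI : Nonempty (γ₀ ∈ s) := ⟨hγ₀⟩
    exact le_of_eq ciSup_const.symm
  refine h1.trans (le_ciSup (f := fun γ => ⨆ _ : γ ∈ s, g γ) ⟨C, ?_⟩ γ₀)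
  rintro y ⟨γ, rfl⟩
  exact Real.iSup_le (fun hγ => hb γ hγ) hC

lemma biSup_eq_iSup_seq {g : Γ → ℝ} {s : Set Γ} {C : ℝ} (hC : 0 ≤ C)
    (h0 : ∀ γ, 0 ≤ g γ) (hb : ∀ γ ∈ s, g γ ≤ C)
    (hcont : ContinuousOn g (closure s)) {u : ℕ → Γ} (hu : ∀ n, u n ∈ s)
    (hus : s ⊆ closure (Set.range u)) :
    (⨆ γ, ⨆ _ : γ ∈ s, g γ) = ⨆ n, g (u n) := by
  have hbdd : BddAbove (Set.range fun n => g (u n)) := by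
    refine ⟨C, ?_⟩; rintro y ⟨n, rfl⟩; exact hb _ (hu n)
  have hR : 0 ≤ ⨆ n, g (u n) := Real.iSup_nonneg fun n => h0 _
  apply le_antisymm
  · refine Real.iSup_le (fun γ => Real.iSup_le (fun hγ => ?_) hR) hR
    obtain ⟨x, hxmem, hxlim⟩ := mem_closure_iff_seq_limit.1 (hus hγ)
    have hcw : ContinuousWithinAt g (closure s) γ := hcont γ (subset_closure hγ)
    have hlim : Tendsto (fun k => g (x k)) atTop (𝓝 (g γ)) := by
      apply hcw.tendsto.comp
      apply tendsto_nhdsWithin_of_tendsto_nhds_of_eventually_within _ hxlim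
      exact Eventually.of_forall fun k => by
        obtain ⟨n, hn⟩ := hxmem k
        exact subset_closure (hn ▸ hu n)
    refine le_of_tendsto hlim (Eventually.of_forall fun k => ?_)
    obtain ⟨n, hn⟩ := hxmem k
    exact hn ▸ le_ciSup hbdd n
  · exact Real.iSup_le (fun n => le_biSup hC hb (hu n)) (biSup_nonneg h0)

lemma measurable_biSup {α : Type*} [MeasurableSpace α] [MeasurableSpace Γ] (g : α → Γ → ℝ)
    (hgm : Measurable fun p : α × Γ => g p.1 p.2)
    {s : Set Γ} (hs : s.Nonempty) (h0 : ∀ a γ, 0 ≤ g a γ)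
    (hcont : ∀ a, ContinuousOn (g a) (closure s))
    (hC : ∀ a, ∃ C, 0 ≤ C ∧ ∀ γ ∈ s, g a γ ≤ C) :
    Measurable fun a => ⨆ γ, ⨆ _ : γ ∈ s, g a γ := by
  obtain ⟨u, hu, hus⟩ := exists_seq_dense_subset hs
  have heq : (fun a => ⨆ γ, ⨆ _ : γ ∈ s, g a γ) = fun a => ⨆ n, g a (u n) := by
    funext a
    obtain ⟨C, hC0, hCb⟩ := hC a
    exact biSup_eq_iSup_seq hC0 (h0 a) hCb (hcont a) hu hus
  rw [heq]
  exact Measurable.iSup fun n => hgm.comp (measurable_id.prodMk measurable_const)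

section fub

variable {Ω : Type} [MeasurableSpace Ω] (P : Measure Ω) [IsProbabilityMeasure P]

lemma fub (φ : ℝ → Ω → ℝ) (hm : Measurable fun p : Ω × ℝ => φ p.2 p.1)
    (h0 : ∀ t ω, 0 ≤ φ t ω) {T B : ℝ} (hT : 0 < T)
    (hint : ∀ t ∈ Set.Ioc (0:ℝ) T, Integrable (φ t) P)
    (hbd : ∀ t ∈ Set.Ioc (0:ℝ) T, ∫ ω, φ t ω ∂P ≤ B) :
    (∀ᵐ ω ∂P, Integrable (fun t => φ t ω) (volume.restrict (Set.Ioc (0:ℝ) T))) ∧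
    Integrable (fun ω => ∫ t in Set.Ioc (0:ℝ) T, φ t ω) P ∧
    ∫ ω, (∫ t in Set.Ioc (0:ℝ) T, φ t ω) ∂P ≤ T * B := by
  set ρ : Measure ℝ := volume.restrict (Set.Ioc (0:ℝ) T) with hρ
  have hρuniv : ρ Set.univ = ENNReal.ofReal T := by
    rw [hρ, Measure.restrict_apply_univ, Real.volume_Ioc, sub_zero]
  haveI hρfin : IsFiniteMeasure ρ := ⟨by rw [hρuniv]; exact ENNReal.ofReal_lt_top⟩
  have hmem : ∀ᵐ t ∂ρ, t ∈ Set.Ioc (0:ℝ) T := ae_restrict_mem measurableSet_Ioc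
  have hsm : AEStronglyMeasurable (fun p : Ω × ℝ => φ p.2 p.1) (P.prod ρ) :=
    hm.aestronglyMeasurable
  have hInt : Integrable (fun p : Ω × ℝ => φ p.2 p.1) (P.prod ρ) := by
    rw [integrable_prod_iff' hsm]
    constructor
    · filter_upwards [hmem] with t ht using hint t ht
    · have hmeas : StronglyMeasurable fun t => ∫ ω, ‖φ t ω‖ ∂P :=
        (hm.norm.stronglyMeasurable).integral_prod_left'
      refine (integrable_const B).mono' hmeas.aestronglyMeasurable ?_
      filter_upwards [hmem] with t ht
      have h1 : ∫ ω, ‖φ t ω‖ ∂P = ∫ ω, φ t ω ∂P := by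
        congr 1; funext ω; exact Real.norm_of_nonneg (h0 t ω)
      rw [Real.norm_of_nonneg (by positivity), h1]
      exact hbd t ht
  refine ⟨hInt.prod_right_ae, hInt.integral_prod_left, ?_⟩
  have hswap : ∫ ω, (∫ t, φ t ω ∂ρ) ∂P = ∫ t, (∫ ω, φ t ω ∂P) ∂ρ :=
    integral_integral_swap (f := fun ω t => φ t ω) hInt
  rw [hρ] at hswap
  rw [hswap]
  have hTB : ∫ _t, B ∂ρ = T * B := by
    rw [integral_const, measureReal_def, hρuniv, smul_eq_mul, ENNReal.toReal_ofReal hT.le]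
  calc ∫ t, (∫ ω, φ t ω ∂P) ∂ρ ≤ ∫ _t, B ∂ρ := by
        refine integral_mono_ae ?_ (integrable_const B) ?_
        · exact hInt.integral_prod_right
        · filter_upwards [hmem] with t ht using hbd t ht
    _ = T * B := hTB

lemma l1 (Y : ℝ → Ω → ℝ) (c k : ℝ)
    (hYm : ∀ T, Measurable (Y T))
    (hYb : ∀ᶠ T in atTop, ∀ ω, |Y T ω| ≤ k)
    (hconv : TendstoInMeasure P Y atTop (fun _ => c)) (hck : |c| ≤ k) :
    Tendsto (fun T => ∫ ω, |Y T ω - c| ∂P) atTop (𝓝 0) := by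
  have hk : 0 ≤ k := le_trans (abs_nonneg c) hck
  rw [Metric.tendsto_atTop]
  intro ε hε
  set η := ε / 3 with hηdef
  have hη0 : 0 < η := by positivity
  have hmc : Tendsto (fun T => (P {ω | η ≤ dist (Y T ω) c}).toReal) atTop (𝓝 0) := by
    have h1 := tendstoInMeasure_iff_dist.1 hconv η hη0
    have h2 := (ENNReal.tendsto_toReal (a := 0) (by simp)).comp h1
    exact h2
  have h2k1 : (0:ℝ) < 2 * k + 1 := by positivity
  have hev : ∀ᶠ T in atTop, (P {ω | η ≤ dist (Y T ω) c}).toReal < η / (2 * k + 1) := by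
    have := hmc.eventually (eventually_lt_nhds (by positivity : (0:ℝ) < η / (2*k+1)))
    simpa using this
  have hcomb := hev.and hYb
  rw [eventually_atTop] at hcomb
  obtain ⟨N, hN⟩ := hcomb
  refine ⟨N, fun T hT => ?_⟩
  obtain ⟨hp, hb⟩ := hN T hT
  set A := {ω | η ≤ dist (Y T ω) c} with hA
  have hAm : MeasurableSet A := by
    apply measurableSet_le measurable_const
    exact (hYm T).dist measurable_const
  have hpt : ∀ ω, |Y T ω - c| ≤ η + A.indicator (fun _ => 2 * k) ω := by
    intro ω
    by_cases hω : ω ∈ A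
    · rw [Set.indicator_of_mem hω]
      calc |Y T ω - c| ≤ |Y T ω| + |c| := abs_sub _ _
        _ ≤ k + k := add_le_add (hb ω) hck
        _ ≤ η + 2 * k := by linarith
    · rw [Set.indicator_of_notMem hω, add_zero]
      have hd : dist (Y T ω) c < η := not_le.1 hω
      rw [Real.dist_eq] at hd
      exact hd.le
  have hRi : Integrable (fun ω => η + A.indicator (fun _ => 2 * k) ω) P :=
    (integrable_const η).add ((integrable_const (2 * k)).indicator hAm)
  have hle : ∫ ω, |Y T ω - c| ∂P ≤ η + (P A).toReal * (2 * k) := by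
    calc ∫ ω, |Y T ω - c| ∂P ≤ ∫ ω, (η + A.indicator (fun _ => 2 * k) ω) ∂P :=
          integral_mono_of_nonneg (Eventually.of_forall fun ω => abs_nonneg _) hRi
            (Eventually.of_forall hpt)
      _ = η + (P A).toReal * (2 * k) := by
          rw [integral_add (integrable_const η) ((integrable_const (2*k)).indicator hAm),
            integral_const, integral_indicator_const _ hAm]
          simp [measure_univ, smul_eq_mul, measureReal_def]
  have hnn : 0 ≤ ∫ ω, |Y T ω - c| ∂P := integral_nonneg fun ω => abs_nonneg _
  rw [Real.dist_eq, sub_zero, abs_of_nonneg hnn]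
  have hfin : (P A).toReal * (2 * k) ≤ η / (2 * k + 1) * (2 * k + 1) := by
    apply mul_le_mul hp.le (by linarith) (by positivity) (by positivity)
  rw [div_mul_cancel₀ _ (ne_of_gt h2k1)] at hfin
  calc ∫ ω, |Y T ω - c| ∂P ≤ η + η := by linarith
    _ < ε := by rw [hηdef]; linarith

end fub

lemma mct {α : Type*} [MeasurableSpace α] (ν : Measure α) [IsProbabilityMeasure ν]
    (h : α → ℝ) (hm : Measurable h) (h0 : ∀ x, 0 ≤ h x) {ε : ℝ} (hε : 0 ≤ ε)
    (hk : ∀ k : ℕ, ∫ x, min (h x) k ∂ν ≤ ε) : Integrable h ν ∧ ∫ x, h x ∂ν ≤ ε := by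
  have hmk : ∀ k : ℕ, Integrable (fun x => min (h x) (k:ℝ)) ν := by
    intro k
    refine (integrable_const (k:ℝ)).mono' (hm.min measurable_const).aestronglyMeasurable ?_
    refine Eventually.of_forall fun x => ?_
    rw [Real.norm_of_nonneg (le_min (h0 x) (Nat.cast_nonneg k))]
    exact min_le_right _ _
  have hmono : Monotone fun (k : ℕ) (x : α) => ENNReal.ofReal (min (h x) (k:ℝ)) := by
    intro k k' hkk' x
    exact ENNReal.ofReal_le_ofReal (min_le_min le_rfl (Nat.cast_le.2 hkk'))
  have hmeask : ∀ k : ℕ, Measurable fun x => ENNReal.ofReal (min (h x) (k:ℝ)) :=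
    fun k => (hm.min measurable_const).ennreal_ofReal
  have h2 : ∫⁻ x, ENNReal.ofReal (h x) ∂ν
      = ⨆ k : ℕ, ∫⁻ x, ENNReal.ofReal (min (h x) (k:ℝ)) ∂ν := by
    rw [← lintegral_iSup hmeask hmono]
    congr 1
    funext x
    apply le_antisymm
    · refine le_iSup_of_le ⌈h x⌉₊ ?_
      rw [min_eq_left (Nat.le_ceil (h x))]
    · exact iSup_le fun k => ENNReal.ofReal_le_ofReal (min_le_left _ _)
  have key : ∫⁻ x, ENNReal.ofReal (h x) ∂ν ≤ ENNReal.ofReal ε := by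
    rw [h2]
    refine iSup_le fun k => ?_
    rw [← ofReal_integral_eq_lintegral_ofReal (hmk k)
      (Eventually.of_forall fun x => le_min (h0 x) (Nat.cast_nonneg k))]
    exact ENNReal.ofReal_le_ofReal (hk k)
  have hint : Integrable h ν := by
    refine ⟨hm.aestronglyMeasurable, ?_⟩
    rw [hasFiniteIntegral_iff_ofReal (Eventually.of_forall h0)]
    exact lt_of_le_of_lt key ENNReal.ofReal_lt_top
  refine ⟨hint, ?_⟩
  rw [integral_eq_lintegral_of_nonneg_ae (Eventually.of_forall h0) hm.aestronglyMeasurable]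
  calc (∫⁻ x, ENNReal.ofReal (h x) ∂ν).toReal ≤ (ENNReal.ofReal ε).toReal :=
        ENNReal.toReal_mono ENNReal.ofReal_ne_top key
    _ = ε := ENNReal.toReal_ofReal hε

end Stmt8Aux
/-- Lemma 6.2 of the paper. Let `G ⊂ ℝ^g` be a bounded open set,
`X` an `ℝ^d`-valued measurable process that is ergodic with invariant marginal `ν`,
and `f : ℝ^d × closure G → ℝ^m` measurable, `C¹` in `γ ∈ G` with derivative `f'`
extending continuously to `closure G`, with `sup_{γ∈G} |f(·,γ)|`, `sup_{γ∈G} |∂_γ f(·,γ)|`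
bounded on bounded sets. If `{sup_{γ∈G} |f(X_t,γ)|}_{t≥0}` is uniformly integrable,
then `E[sup_{γ∈G} |T⁻¹∫₀^T f(X_t,γ) dt − ∫ f(x,γ) ν(dx)|] → 0` as `T → ∞`. -/
theorem stmt8 (d g m : ℕ)
    (G : Set (EuclideanSpace ℝ (Fin g))) (hGopen : IsOpen G) (hGbdd : Bornology.IsBounded G)
    {Ω : Type} [MeasurableSpace Ω] (P : Measure Ω) [IsProbabilityMeasure P]
    (X : ℝ → Ω → EuclideanSpace ℝ (Fin d))
    (hXmeas : Measurable fun pr : ℝ × Ω => X pr.1 pr.2)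
    (ν : Measure (EuclideanSpace ℝ (Fin d))) [IsProbabilityMeasure ν]
    -- ergodicity of X with limit distribution ν
    (hergo : ∀ ψ : EuclideanSpace ℝ (Fin d) → ℝ, Measurable ψ → (∃ C, ∀ x, |ψ x| ≤ C) →
      TendstoInMeasure P (fun T ω => T⁻¹ * ∫ t in Set.Ioc (0 : ℝ) T, ψ (X t ω)) atTop
        (fun _ => ∫ x, ψ x ∂ν))
    (f : EuclideanSpace ℝ (Fin d) → EuclideanSpace ℝ (Fin g) → EuclideanSpace ℝ (Fin m))
    (f' : EuclideanSpace ℝ (Fin d) → EuclideanSpace ℝ (Fin g) →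
      (EuclideanSpace ℝ (Fin g) →L[ℝ] EuclideanSpace ℝ (Fin m)))
    (hfmeas : Measurable fun pr : EuclideanSpace ℝ (Fin d) × EuclideanSpace ℝ (Fin g) =>
      f pr.1 pr.2)
    -- f(x,·) is C¹ on G, with f and its derivative extending continuously to closure G
    (hderiv : ∀ x, ∀ γ ∈ G, HasFDerivAt (f x) (f' x γ) γ)
    (hfcont : ∀ x, ContinuousOn (f x) (closure G))
    (hf'cont : ∀ x, ContinuousOn (f' x) (closure G))
    -- sup_{γ∈G}|f(·,γ)| and sup_{γ∈G}|∂_γ f(·,γ)| are bounded on bounded sets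
    (hbdd : ∀ s : Set (EuclideanSpace ℝ (Fin d)), Bornology.IsBounded s →
      ∃ C, ∀ x ∈ s, ∀ γ ∈ G, ‖f x γ‖ ≤ C ∧ ‖f' x γ‖ ≤ C)
    -- uniform integrability of {sup_{γ∈G} |f(X_t, γ)|}_{t ≥ 0}
    (hInt : ∀ t : ℝ, 0 ≤ t →
      Integrable (fun ω => ⨆ (γ : EuclideanSpace ℝ (Fin g)) (_ : γ ∈ G), ‖f (X t ω) γ‖) P)
    (hUI : ∀ ε : ℝ, 0 < ε → ∃ M : ℝ, ∀ t : ℝ, 0 ≤ t →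
      ∫ ω, Set.indicator
          {ω | M ≤ ⨆ (γ : EuclideanSpace ℝ (Fin g)) (_ : γ ∈ G), ‖f (X t ω) γ‖}
          (fun ω => ⨆ (γ : EuclideanSpace ℝ (Fin g)) (_ : γ ∈ G), ‖f (X t ω) γ‖) ω ∂P ≤ ε) :
    Tendsto (fun T : ℝ => ∫ ω, (⨆ (γ : EuclideanSpace ℝ (Fin g)) (_ : γ ∈ G),
        ‖T⁻¹ • (∫ t in Set.Ioc (0 : ℝ) T, f (X t ω) γ) - ∫ x, f x γ ∂ν‖) ∂P) atTop
      (𝓝 0) := by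
  classical
  rcases Set.eq_empty_or_nonempty G with hGe | hGne
  · have hzero : ∀ T : ℝ, ∫ ω, (⨆ (γ : EuclideanSpace ℝ (Fin g)) (_ : γ ∈ G),
        ‖T⁻¹ • (∫ t in Set.Ioc (0 : ℝ) T, f (X t ω) γ) - ∫ x, f x γ ∂ν‖) ∂P = 0 := by
      intro T
      have h1 : ∀ ω : Ω, (⨆ (γ : EuclideanSpace ℝ (Fin g)) (_ : γ ∈ G),
          ‖T⁻¹ • (∫ t in Set.Ioc (0 : ℝ) T, f (X t ω) γ) - ∫ x, f x γ ∂ν‖) = 0 := by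
        intro ω
        have h2 : ∀ γ : EuclideanSpace ℝ (Fin g), (⨆ _ : γ ∈ G,
            ‖T⁻¹ • (∫ t in Set.Ioc (0 : ℝ) T, f (X t ω) γ) - ∫ x, f x γ ∂ν‖) = 0 := by
          intro γ
          haveI : IsEmpty (γ ∈ G) := ⟨fun h => by rw [hGe] at h; exact h⟩
          exact Real.iSup_of_isEmpty _
        simp only [h2, Real.iSup_const_zero]
      simp only [h1, integral_zero]
    simp only [hzero]
    exact tendsto_const_nhds
  -- Main case
  set K := closure G with hK
  have hKclosed : IsClosed K := isClosed_closure
  have hKcomp : IsCompact K := Metric.isCompact_of_isClosed_isBounded hKclosed hGbdd.closure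
  have hGK : G ⊆ K := subset_closure
  set F : EuclideanSpace ℝ (Fin d) → ℝ := fun x => ⨆ γ, ⨆ _ : γ ∈ G, ‖f x γ‖ with hFdef
  have hInt' : ∀ t : ℝ, 0 ≤ t → Integrable (fun ω => F (X t ω)) P := by
    intro t ht; simpa only [hFdef] using hInt t ht
  have hUI' : ∀ ε : ℝ, 0 < ε → ∃ M : ℝ, ∀ t : ℝ, 0 ≤ t →
      ∫ ω, Set.indicator {ω | M ≤ F (X t ω)} (fun ω => F (X t ω)) ω ∂P ≤ ε := by
    intro ε hε; simpa only [hFdef] using hUI ε hε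
  have hfγ : ∀ γ, Measurable fun x => f x γ :=
    fun γ => hfmeas.comp (measurable_id.prodMk measurable_const)
  have hXsec : ∀ ω, Measurable fun t => X t ω :=
    fun ω => hXmeas.comp (measurable_id.prodMk measurable_const)
  have hXt : ∀ t, Measurable fun ω => X t ω :=
    fun t => hXmeas.comp (measurable_const.prodMk measurable_id)
  have hFbound : ∀ x, ∃ C, 0 ≤ C ∧ ∀ γ ∈ K, ‖f x γ‖ ≤ C := by
    intro x
    obtain ⟨C, hC⟩ := hKcomp.bddAbove_image ((hfcont x).norm)
    exact ⟨max C 0, le_max_right _ _,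
      fun γ hγ => le_trans (hC (Set.mem_image_of_mem _ hγ)) (le_max_left _ _)⟩
  have hFle : ∀ x, ∀ γ ∈ G, ‖f x γ‖ ≤ F x := by
    intro x γ hγ
    obtain ⟨C, hC0, hCb⟩ := hFbound x
    exact Stmt8Aux.le_biSup hC0 (fun γ' hγ' => hCb γ' (hGK hγ')) hγ
  have hF0 : ∀ x, 0 ≤ F x := fun x => Stmt8Aux.biSup_nonneg (fun γ => norm_nonneg _)
  have hFK : ∀ x, ∀ γ ∈ K, ‖f x γ‖ ≤ F x := by
    intro x γ hγ
    obtain ⟨xs, hxsmem, hxslim⟩ := mem_closure_iff_seq_limit.1 hγ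
    have hcw : ContinuousWithinAt (fun γ' => ‖f x γ'‖) K γ := ((hfcont x).norm) γ hγ
    have hlim : Tendsto (fun j => ‖f x (xs j)‖) atTop (𝓝 ‖f x γ‖) := by
      apply hcw.tendsto.comp
      apply tendsto_nhdsWithin_of_tendsto_nhds_of_eventually_within _ hxslim
      exact Eventually.of_forall fun j => hGK (hxsmem j)
    exact le_of_tendsto hlim (Eventually.of_forall fun j => hFle x _ (hxsmem j))
  have hFmeas : Measurable F := by
    apply Stmt8Aux.measurable_biSup (g := fun x γ => ‖f x γ‖) hfmeas.norm hGne
      (fun _ _ => norm_nonneg _) (fun x => (hfcont x).norm)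
      (fun x => (hFbound x).imp fun C hC => ⟨hC.1, fun γ hγ => hC.2 γ (hGK hγ)⟩)
  -- finite restricted measures
  have hfinIoc : ∀ T : ℝ, IsFiniteMeasure (volume.restrict (Set.Ioc (0:ℝ) T)) := by
    intro T
    refine ⟨?_⟩
    rw [Measure.restrict_apply_univ, Real.volume_Ioc]
    exact ENNReal.ofReal_lt_top
  have hvolT : ∀ T : ℝ, 0 < T → (volume.restrict (Set.Ioc (0:ℝ) T)) Set.univ = ENNReal.ofReal T := by
    intro T hT
    rw [Measure.restrict_apply_univ, Real.volume_Ioc, sub_zero]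
  -- scalar ergodic L¹ lemma
  have hl1 : ∀ ψ : EuclideanSpace ℝ (Fin d) → ℝ, Measurable ψ → ∀ k : ℝ, (∀ x, |ψ x| ≤ k) →
      Tendsto (fun T => ∫ ω, |T⁻¹ * (∫ t in Set.Ioc (0:ℝ) T, ψ (X t ω)) - ∫ x, ψ x ∂ν| ∂P)
        atTop (𝓝 0) := by
    intro ψ hψ k hkb
    have hk0 : 0 ≤ k := le_trans (abs_nonneg _) (hkb 0)
    have hYm : ∀ T : ℝ, Measurable fun ω => T⁻¹ * ∫ t in Set.Ioc (0:ℝ) T, ψ (X t ω) := by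
      intro T
      have hj : Measurable fun p : Ω × ℝ => ψ (X p.2 p.1) :=
        hψ.comp (hXmeas.comp measurable_swap)
      exact (measurable_const.mul
        ((hj.stronglyMeasurable.integral_prod_right'
          (ν := volume.restrict (Set.Ioc (0:ℝ) T))).measurable))
    have hYb : ∀ᶠ T in atTop, ∀ ω, |T⁻¹ * ∫ t in Set.Ioc (0:ℝ) T, ψ (X t ω)| ≤ k := by
      filter_upwards [eventually_ge_atTop (1:ℝ)] with T hT ω
      have hT0 : 0 < T := lt_of_lt_of_le one_pos hT
      have hb : ‖∫ t in Set.Ioc (0:ℝ) T, ψ (X t ω)‖ ≤ k * T := by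
        have h1 : volume (Set.Ioc (0:ℝ) T) < ⊤ := by
          rw [Real.volume_Ioc]; exact ENNReal.ofReal_lt_top
        have h2 := norm_setIntegral_le_of_norm_le_const h1
          (f := fun t => ψ (X t ω)) (C := k)
          (fun t _ => by rw [Real.norm_eq_abs]; exact hkb _)
        rw [measureReal_def, Real.volume_Ioc, sub_zero, ENNReal.toReal_ofReal hT0.le] at h2
        exact h2
      rw [abs_mul, abs_inv, abs_of_pos hT0]
      calc T⁻¹ * |∫ t in Set.Ioc (0:ℝ) T, ψ (X t ω)| ≤ T⁻¹ * (k * T) := by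
            apply mul_le_mul_of_nonneg_left _ (inv_nonneg.2 hT0.le)
            rw [← Real.norm_eq_abs]; exact hb
        _ = k := by field_simp
    have hck : |∫ x, ψ x ∂ν| ≤ k := by
      have := norm_integral_le_of_norm_le_const (μ := ν)
        (f := ψ) (C := k) (Eventually.of_forall fun x => by rw [Real.norm_eq_abs]; exact hkb x)
      simpa [measure_univ] using this
    exact Stmt8Aux.l1 P _ _ k hYm hYb (hergo ψ hψ ⟨k, hkb⟩) hck
  -- transfer of expectations bounds to ν
  have htrans : ∀ ψ : EuclideanSpace ℝ (Fin d) → ℝ, Measurable ψ → (∀ x, 0 ≤ ψ x) →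
      ∀ k : ℝ, (∀ x, ψ x ≤ k) → ∀ ε : ℝ, 0 ≤ ε →
      (∀ t, 0 ≤ t → ∫ ω, ψ (X t ω) ∂P ≤ ε) → ∫ x, ψ x ∂ν ≤ ε := by
    intro ψ hψ h0 k hkb ε hε hEt
    have habs : ∀ x, |ψ x| ≤ k := fun x => by rw [abs_of_nonneg (h0 x)]; exact hkb x
    have hl := hl1 ψ hψ k habs
    have hEY : ∀ T : ℝ, 1 ≤ T →
        (∫ x, ψ x ∂ν) - ε ≤ ∫ ω, |T⁻¹ * (∫ t in Set.Ioc (0:ℝ) T, ψ (X t ω)) - ∫ x, ψ x ∂ν| ∂P := by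
      intro T hT
      have hT0 : 0 < T := lt_of_lt_of_le one_pos hT
      have hφm : Measurable fun p : Ω × ℝ => ψ (X p.2 p.1) :=
        hψ.comp (hXmeas.comp measurable_swap)
      have hintt : ∀ t ∈ Set.Ioc (0:ℝ) T, Integrable (fun ω => ψ (X t ω)) P := by
        intro t ht
        refine (integrable_const k).mono' ((hψ.comp (hXt t)).aestronglyMeasurable) ?_
        exact Eventually.of_forall fun ω => by rw [Real.norm_eq_abs]; exact habs _
      obtain ⟨hsec, hYint, hEle⟩ := Stmt8Aux.fub P (fun t ω => ψ (X t ω)) hφm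
        (fun t ω => h0 _) hT0 hintt (fun t ht => hEt t ht.1.le)
      set c := ∫ x, ψ x ∂ν with hc
      have hYint' : Integrable (fun ω => T⁻¹ * ∫ t in Set.Ioc (0:ℝ) T, ψ (X t ω)) P :=
        hYint.const_mul _
      have hEY2 : ∫ ω, (T⁻¹ * ∫ t in Set.Ioc (0:ℝ) T, ψ (X t ω)) ∂P ≤ ε := by
        rw [integral_const_mul]
        calc T⁻¹ * ∫ ω, (∫ t in Set.Ioc (0:ℝ) T, ψ (X t ω)) ∂P ≤ T⁻¹ * (T * ε) := by
              apply mul_le_mul_of_nonneg_left hEle (inv_nonneg.2 hT0.le)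
          _ = ε := by field_simp
      calc c - ε ≤ c - ∫ ω, (T⁻¹ * ∫ t in Set.Ioc (0:ℝ) T, ψ (X t ω)) ∂P := by linarith
        _ = ∫ ω, (c - T⁻¹ * ∫ t in Set.Ioc (0:ℝ) T, ψ (X t ω)) ∂P := by
            rw [integral_sub (integrable_const c) hYint', integral_const]
            simp [measure_univ]
        _ ≤ ∫ ω, |T⁻¹ * (∫ t in Set.Ioc (0:ℝ) T, ψ (X t ω)) - c| ∂P := by
            refine integral_mono ((integrable_const c).sub hYint') ((hYint'.sub (integrable_const c)).abs) ?_
            intro ω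
            dsimp only
            rw [abs_sub_comm]
            exact le_abs_self _
    have hge := ge_of_tendsto hl (eventually_atTop.2 ⟨1, hEY⟩)
    linarith
  -- expectation bound for F along the process
  obtain ⟨M₁, hM₁⟩ := hUI' 1 one_pos
  set B₀ : ℝ := max M₁ 0 + 1 with hB₀
  have hB₀0 : 0 ≤ B₀ := add_nonneg (le_max_right M₁ 0) zero_le_one
  have hEF : ∀ t, 0 ≤ t → ∫ ω, F (X t ω) ∂P ≤ B₀ := by
    intro t ht
    have hAm : MeasurableSet {ω | M₁ ≤ F (X t ω)} :=
      measurableSet_le measurable_const (hFmeas.comp (hXt t))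
    have hind : Integrable
        (fun ω => Set.indicator {ω' | M₁ ≤ F (X t ω')} (fun ω' => F (X t ω')) ω) P :=
      (hInt' t ht).indicator hAm
    have hptw : ∀ ω, F (X t ω) ≤ max M₁ 0 +
        Set.indicator {ω' | M₁ ≤ F (X t ω')} (fun ω' => F (X t ω')) ω := by
      intro ω
      by_cases hω : M₁ ≤ F (X t ω)
      · rw [Set.indicator_of_mem (show ω ∈ {ω' | M₁ ≤ F (X t ω')} from hω)]
        have h1 : (0:ℝ) ≤ max M₁ 0 := le_max_right _ _
        linarith
      · rw [Set.indicator_of_notMem (show ω ∉ {ω' | M₁ ≤ F (X t ω')} from hω), add_zero]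
        exact le_trans (not_le.1 hω).le (le_max_left _ _)
    calc ∫ ω, F (X t ω) ∂P
        ≤ ∫ ω, (max M₁ 0 +
          Set.indicator {ω' | M₁ ≤ F (X t ω')} (fun ω' => F (X t ω')) ω) ∂P :=
          integral_mono (hInt' t ht) ((integrable_const _).add hind) hptw
      _ = max M₁ 0 + ∫ ω, Set.indicator {ω' | M₁ ≤ F (X t ω')} (fun ω' => F (X t ω')) ω ∂P := by
          rw [integral_add (integrable_const _) hind, integral_const]
          simp [measure_univ]
      _ ≤ B₀ := by rw [hB₀]; linarith [hM₁ t ht]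
  have hminint : ∀ h : EuclideanSpace ℝ (Fin d) → ℝ, Measurable h → (∀ x, 0 ≤ h x) →
      (∀ x, h x ≤ F x) → ∀ t, 0 ≤ t → Integrable (fun ω => h (X t ω)) P := by
    intro h hm h0 hle t ht
    refine (hInt' t ht).mono' ((hm.comp (hXt t)).aestronglyMeasurable) ?_
    exact Eventually.of_forall fun ω => by
      rw [Real.norm_of_nonneg (h0 _)]; exact hle _
  have hFν : Integrable F ν ∧ ∫ x, F x ∂ν ≤ B₀ := by
    refine Stmt8Aux.mct ν F hFmeas hF0 hB₀0 ?_
    intro kn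
    refine htrans _ (hFmeas.min measurable_const)
      (fun x => le_min (hF0 x) (Nat.cast_nonneg kn)) kn
      (fun x => min_le_right _ _) B₀ hB₀0 ?_
    intro t ht
    calc ∫ ω, min (F (X t ω)) (kn:ℝ) ∂P ≤ ∫ ω, F (X t ω) ∂P :=
          integral_mono
            (hminint _ (hFmeas.min measurable_const)
              (fun x => le_min (hF0 x) (Nat.cast_nonneg kn)) (fun x => min_le_left _ _) t ht)
            (hInt' t ht) (fun ω => min_le_left _ _)
      _ ≤ B₀ := hEF t ht
  have hfνint : ∀ γ ∈ K, Integrable (fun x => f x γ) ν := by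
    intro γ hγ
    refine hFν.1.mono' (hfγ γ).aestronglyMeasurable ?_
    exact Eventually.of_forall fun x => hFK x γ hγ
  -- truncation block, parametrized by the UI level
  have hGmblock : ∀ Mu ε : ℝ, 0 < ε →
      (∀ t, 0 ≤ t → ∫ ω, Set.indicator {ω | Mu ≤ F (X t ω)} (fun ω => F (X t ω)) ω ∂P ≤ ε) →
      (∀ t, 0 ≤ t → ∫ ω, (if Mu ≤ F (X t ω) then F (X t ω) else 0) ∂P ≤ ε) ∧
      Integrable (fun x => if Mu ≤ F x then F x else 0) ν ∧
      ∫ x, (if Mu ≤ F x then F x else 0) ∂ν ≤ ε := by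
    intro Mu ε hε hUIe
    have hGmm : Measurable fun x => if Mu ≤ F x then F x else 0 :=
      Measurable.ite (measurableSet_le measurable_const hFmeas) hFmeas measurable_const
    have hGm0 : ∀ x, (0:ℝ) ≤ if Mu ≤ F x then F x else 0 := by
      intro x; split
      · exact hF0 x
      · exact le_rfl
    have hGmF : ∀ x, (if Mu ≤ F x then F x else 0) ≤ F x := by
      intro x; split
      · exact le_rfl
      · exact hF0 x
    have hEGm : ∀ t, 0 ≤ t → ∫ ω, (if Mu ≤ F (X t ω) then F (X t ω) else 0) ∂P ≤ ε := by
      intro t ht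
      have heq : (fun ω => if Mu ≤ F (X t ω) then F (X t ω) else 0)
          = fun ω => Set.indicator {ω' | Mu ≤ F (X t ω')} (fun ω' => F (X t ω')) ω := by
        funext ω
        rw [Set.indicator_apply]
        rfl
      rw [heq]
      exact hUIe t ht
    refine ⟨hEGm, ?_⟩
    refine Stmt8Aux.mct ν _ hGmm hGm0 hε.le ?_
    intro kn
    refine htrans _ (hGmm.min measurable_const)
      (fun x => le_min (hGm0 x) (Nat.cast_nonneg kn)) kn
      (fun x => min_le_right _ _) ε hε.le ?_
    intro t ht
    calc ∫ ω, min (if Mu ≤ F (X t ω) then F (X t ω) else 0) (kn:ℝ) ∂P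
        ≤ ∫ ω, (if Mu ≤ F (X t ω) then F (X t ω) else 0) ∂P :=
          integral_mono
            (hminint _ (hGmm.min measurable_const)
              (fun x => le_min (hGm0 x) (Nat.cast_nonneg kn))
              (fun x => le_trans (min_le_left _ _) (hGmF x)) t ht)
            (hminint _ hGmm hGm0 hGmF t ht) (fun ω => min_le_left _ _)
      _ ≤ ε := hEGm t ht
  -- vector-valued ergodic L¹ lemma
  have hl4 : ∀ φv : EuclideanSpace ℝ (Fin d) → EuclideanSpace ℝ (Fin m), Measurable φv →
      ∀ k : ℝ, (∀ x, ‖φv x‖ ≤ k) →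
      Tendsto (fun T => ∫ ω, ‖T⁻¹ • (∫ t in Set.Ioc (0:ℝ) T, φv (X t ω)) - ∫ x, φv x ∂ν‖ ∂P)
        atTop (𝓝 0) := by
    intro φv hφm k hkb
    have hk0 : 0 ≤ k := le_trans (norm_nonneg _) (hkb 0)
    have hcoord : ∀ (j : Fin m) (v : EuclideanSpace ℝ (Fin m)), |v j| ≤ ‖v‖ := by
      intro j v
      calc |v j| = Real.sqrt ((v j) ^ 2) := (Real.sqrt_sq_eq_abs _).symm
        _ ≤ Real.sqrt (∑ i, ‖v i‖ ^ 2) := Real.sqrt_le_sqrt (by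
            have h1 : (v j) ^ 2 = ‖v j‖ ^ 2 := by rw [Real.norm_eq_abs, sq_abs]
            rw [h1]
            exact Finset.single_le_sum (f := fun i => ‖v i‖ ^ 2)
              (fun i _ => by positivity) (Finset.mem_univ j))
        _ = ‖v‖ := (EuclideanSpace.norm_eq _).symm
    have habs : ∀ (j : Fin m) (x : EuclideanSpace ℝ (Fin d)), |φv x j| ≤ k :=
      fun j x => le_trans (hcoord j (φv x)) (hkb x)
    have hψm : ∀ j : Fin m, Measurable fun x => φv x j := fun j =>
      ((EuclideanSpace.proj (𝕜 := ℝ) j).continuous.measurable).comp hφm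
    have hIν : Integrable φv ν :=
      (integrable_const k).mono' hφm.aestronglyMeasurable (Eventually.of_forall hkb)
    have hIt : ∀ (T : ℝ) (ω : Ω),
        Integrable (fun t => φv (X t ω)) (volume.restrict (Set.Ioc (0:ℝ) T)) := by
      intro T ω
      haveI := hfinIoc T
      exact (integrable_const k).mono' ((hφm.comp (hXsec ω)).aestronglyMeasurable)
        (Eventually.of_forall fun t => hkb _)
    have hproj : ∀ (T : ℝ) (ω : Ω) (j : Fin m),
        (T⁻¹ • (∫ t in Set.Ioc (0:ℝ) T, φv (X t ω)) - ∫ x, φv x ∂ν) j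
          = T⁻¹ * (∫ t in Set.Ioc (0:ℝ) T, φv (X t ω) j) - ∫ x, φv x j ∂ν := by
      intro T ω j
      have h1 : (∫ t in Set.Ioc (0:ℝ) T, φv (X t ω)) j
          = ∫ t in Set.Ioc (0:ℝ) T, φv (X t ω) j :=
        ((EuclideanSpace.proj (𝕜 := ℝ) j).integral_comp_comm (hIt T ω)).symm
      have h2 : (∫ x, φv x ∂ν) j = ∫ x, φv x j ∂ν :=
        ((EuclideanSpace.proj (𝕜 := ℝ) j).integral_comp_comm hIν).symm
      have h3 : (T⁻¹ • (∫ t in Set.Ioc (0:ℝ) T, φv (X t ω)) - ∫ x, φv x ∂ν) j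
          = T⁻¹ * (∫ t in Set.Ioc (0:ℝ) T, φv (X t ω)) j - (∫ x, φv x ∂ν) j := rfl
      rw [h3, h1, h2]
    have hYjm : ∀ (T : ℝ) (j : Fin m),
        Measurable fun ω => T⁻¹ * ∫ t in Set.Ioc (0:ℝ) T, φv (X t ω) j := by
      intro T j
      have hj : Measurable fun p : Ω × ℝ => φv (X p.2 p.1) j :=
        (hψm j).comp (hXmeas.comp measurable_swap)
      exact measurable_const.mul
        ((hj.stronglyMeasurable.integral_prod_right'
          (ν := volume.restrict (Set.Ioc (0:ℝ) T))).measurable)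
    have hintj : ∀ (T : ℝ) (j : Fin m), Integrable
        (fun ω => |T⁻¹ * (∫ t in Set.Ioc (0:ℝ) T, φv (X t ω) j) - ∫ x, φv x j ∂ν|) P := by
      intro T j
      refine (integrable_const (|T⁻¹| * (k * |T|) + k)).mono'
        (((hYjm T j).sub measurable_const).abs.aestronglyMeasurable) ?_
      refine Eventually.of_forall fun ω => ?_
      rw [Real.norm_eq_abs, abs_abs]
      have hb1 : |∫ t in Set.Ioc (0:ℝ) T, φv (X t ω) j| ≤ k * |T| := by
        have h1 : volume (Set.Ioc (0:ℝ) T) < ⊤ := by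
          rw [Real.volume_Ioc]; exact ENNReal.ofReal_lt_top
        have h2 := norm_setIntegral_le_of_norm_le_const h1
          (f := fun t => φv (X t ω) j) (C := k)
          (fun t _ => by rw [Real.norm_eq_abs]; exact habs j _)
        rw [Real.norm_eq_abs] at h2
        refine le_trans h2 ?_
        apply mul_le_mul_of_nonneg_left _ hk0
        rw [measureReal_def, Real.volume_Ioc]
        rcases le_or_gt T 0 with hT | hT
        · rw [sub_zero, ENNReal.ofReal_of_nonpos hT]
          simpa using abs_nonneg T
        · rw [sub_zero, ENNReal.toReal_ofReal hT.le]
          exact le_abs_self T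
      have hb2 : |∫ x, φv x j ∂ν| ≤ k := by
        have := norm_integral_le_of_norm_le_const (μ := ν) (f := fun x => φv x j) (C := k)
          (Eventually.of_forall fun x => by rw [Real.norm_eq_abs]; exact habs j x)
        rw [Real.norm_eq_abs] at this
        simpa [measure_univ] using this
      calc |T⁻¹ * (∫ t in Set.Ioc (0:ℝ) T, φv (X t ω) j) - ∫ x, φv x j ∂ν|
          ≤ |T⁻¹ * (∫ t in Set.Ioc (0:ℝ) T, φv (X t ω) j)| + |∫ x, φv x j ∂ν| := abs_sub _ _
        _ ≤ |T⁻¹| * (k * |T|) + k := by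
            rw [abs_mul]
            exact add_le_add (mul_le_mul_of_nonneg_left hb1 (abs_nonneg _)) hb2
    have hsumlim : Tendsto (fun T => ∑ j : Fin m,
        ∫ ω, |T⁻¹ * (∫ t in Set.Ioc (0:ℝ) T, φv (X t ω) j) - ∫ x, φv x j ∂ν| ∂P)
        atTop (𝓝 0) := by
      have h1 := tendsto_finset_sum (Finset.univ : Finset (Fin m))
        (fun j _ => hl1 (fun x => φv x j) (hψm j) k (habs j))
      simpa using h1
    refine squeeze_zero' (Eventually.of_forall fun T => integral_nonneg fun ω => norm_nonneg _)
      (Eventually.of_forall fun T => ?_) hsumlim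
    calc ∫ ω, ‖T⁻¹ • (∫ t in Set.Ioc (0:ℝ) T, φv (X t ω)) - ∫ x, φv x ∂ν‖ ∂P
        ≤ ∫ ω, (∑ j : Fin m,
            |T⁻¹ * (∫ t in Set.Ioc (0:ℝ) T, φv (X t ω) j) - ∫ x, φv x j ∂ν|) ∂P := by
          refine integral_mono_of_nonneg (Eventually.of_forall fun ω => norm_nonneg _)
            (integrable_finset_sum _ fun j _ => hintj T j) (Eventually.of_forall fun ω => ?_)
          refine le_trans (Stmt8Aux.euclid_norm_le_sum _) ?_
          refine Finset.sum_le_sum fun j _ => ?_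
          rw [hproj T ω j]
      _ = ∑ j : Fin m, ∫ ω, |T⁻¹ * (∫ t in Set.Ioc (0:ℝ) T, φv (X t ω) j) - ∫ x, φv x j ∂ν| ∂P :=
          integral_finset_sum _ (fun j _ => hintj T j)
  -- fix the target accuracy
  rw [Metric.tendsto_atTop]
  intro ε₀ hε₀
  set ε := ε₀ / 7 with hεdef
  have hε : 0 < ε := by positivity
  obtain ⟨Mu, hMu⟩ := hUI' ε hε
  obtain ⟨hEGm, hGmν, hGmνle⟩ := hGmblock Mu ε hε hMu
  set Gm : EuclideanSpace ℝ (Fin d) → ℝ := fun x => if Mu ≤ F x then F x else 0 with hGmdef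
  have hGmm : Measurable Gm :=
    Measurable.ite (measurableSet_le measurable_const hFmeas) hFmeas measurable_const
  have hGm0 : ∀ x, 0 ≤ Gm x := by
    intro x; rw [hGmdef]; dsimp only; split
    · exact hF0 x
    · exact le_rfl
  have hGmF : ∀ x, Gm x ≤ F x := by
    intro x; rw [hGmdef]; dsimp only; split
    · exact le_rfl
    · exact hF0 x
  -- the truncation scale
  set M₂ : ℝ := max Mu 0 with hM₂
  have hM₂0 : 0 ≤ M₂ := le_max_right _ _
  set cc : EuclideanSpace ℝ (Fin d) → ℝ := fun x => if F x ≤ M₂ then 1 else M₂ / F x with hccdef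
  have hcc0 : ∀ x, 0 ≤ cc x := by
    intro x; rw [hccdef]; dsimp only; split
    · exact zero_le_one
    · exact div_nonneg hM₂0 (hF0 x)
  have hcc1 : ∀ x, cc x ≤ 1 := by
    intro x; rw [hccdef]; dsimp only; split
    · exact le_rfl
    · rename_i hx
      have hFx : 0 < F x := lt_of_le_of_lt hM₂0 (not_le.1 hx)
      rw [div_le_one hFx]
      exact (not_le.1 hx).le
  have hccm : Measurable cc :=
    Measurable.ite (measurableSet_le hFmeas measurable_const) measurable_const
      (measurable_const.div hFmeas)
  set fM : EuclideanSpace ℝ (Fin d) → EuclideanSpace ℝ (Fin g) → EuclideanSpace ℝ (Fin m) :=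
    fun x γ => cc x • f x γ with hfMdef
  have hfMm : ∀ γ, Measurable fun x => fM x γ := fun γ => hccm.smul (hfγ γ)
  have hfMjm : Measurable fun p :
      EuclideanSpace ℝ (Fin d) × EuclideanSpace ℝ (Fin g) => fM p.1 p.2 :=
    (hccm.comp measurable_fst).smul hfmeas
  have hfMcont : ∀ x, ContinuousOn (fM x) K := fun x => (hfcont x).const_smul (cc x)
  have hfMle : ∀ x, ∀ γ ∈ K, ‖fM x γ‖ ≤ M₂ := by
    intro x γ hγ
    have h1 : ‖fM x γ‖ = cc x * ‖f x γ‖ := by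
      rw [hfMdef]; dsimp only
      rw [norm_smul, Real.norm_eq_abs, abs_of_nonneg (hcc0 x)]
    rw [h1, hccdef]; dsimp only
    split
    · rename_i hx
      rw [one_mul]
      exact le_trans (hFK x γ hγ) hx
    · rename_i hx
      have hFx : 0 < F x := lt_of_le_of_lt hM₂0 (not_le.1 hx)
      calc M₂ / F x * ‖f x γ‖ ≤ M₂ / F x * F x :=
            mul_le_mul_of_nonneg_left (hFK x γ hγ) (div_nonneg hM₂0 hFx.le)
        _ = M₂ := div_mul_cancel₀ _ (ne_of_gt hFx)
  have hdiff : ∀ x, ∀ γ ∈ K, ‖f x γ - fM x γ‖ ≤ Gm x := by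
    intro x γ hγ
    have h1 : f x γ - fM x γ = (1 - cc x) • f x γ := by
      rw [hfMdef]; dsimp only; rw [sub_smul, one_smul]
    have h2 : (0:ℝ) ≤ 1 - cc x := by linarith [hcc1 x]
    rw [h1, norm_smul, Real.norm_eq_abs, abs_of_nonneg h2]
    rw [hccdef]; dsimp only
    split
    · rename_i hx
      simpa using hGm0 x
    · rename_i hx
      have hFx : 0 < F x := lt_of_le_of_lt hM₂0 (not_le.1 hx)
      have hMuF : Mu ≤ F x := le_trans (le_max_left Mu 0) (not_le.1 hx).le
      have hGmx : Gm x = F x := by rw [hGmdef]; dsimp only; rw [if_pos hMuF]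
      rw [hGmx]
      calc (1 - M₂ / F x) * ‖f x γ‖ ≤ 1 * ‖f x γ‖ := by
            apply mul_le_mul_of_nonneg_right _ (norm_nonneg _)
            have h3 : 0 ≤ M₂ / F x := div_nonneg hM₂0 hFx.le
            linarith
        _ = ‖f x γ‖ := one_mul _
        _ ≤ F x := hFK x γ hγ
  have hfMνint : ∀ γ ∈ K, Integrable (fun x => fM x γ) ν := by
    intro γ hγ
    exact (integrable_const M₂).mono' (hfMm γ).aestronglyMeasurable
      (Eventually.of_forall fun x => hfMle x γ hγ)
  -- local oscillation functions
  have hWblock : ∀ γi ∈ K, ∀ δ : ℝ, 0 < δ →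
      Measurable (fun x => ⨆ γ', ⨆ _ : γ' ∈ K ∩ Metric.ball γi δ, ‖fM x γ' - fM x γi‖) ∧
      (∀ x, 0 ≤ (⨆ γ', ⨆ _ : γ' ∈ K ∩ Metric.ball γi δ, ‖fM x γ' - fM x γi‖)) ∧
      (∀ x, (⨆ γ', ⨆ _ : γ' ∈ K ∩ Metric.ball γi δ, ‖fM x γ' - fM x γi‖) ≤ 2 * M₂) ∧
      (∀ x, ∀ γ' ∈ K ∩ Metric.ball γi δ,
        ‖fM x γ' - fM x γi‖ ≤ ⨆ γ'', ⨆ _ : γ'' ∈ K ∩ Metric.ball γi δ, ‖fM x γ'' - fM x γi‖) := by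
    intro γi hγi δ hδ
    have hsne : (K ∩ Metric.ball γi δ).Nonempty := ⟨γi, hγi, Metric.mem_ball_self hδ⟩
    have hsub : closure (K ∩ Metric.ball γi δ) ⊆ K :=
      (closure_mono Set.inter_subset_left).trans hKclosed.closure_eq.subset
    have hcont' : ∀ x, ContinuousOn (fun γ' => ‖fM x γ' - fM x γi‖)
        (closure (K ∩ Metric.ball γi δ)) :=
      fun x => (((hfMcont x).mono hsub).sub continuousOn_const).norm
    have hb : ∀ x, ∀ γ' ∈ K ∩ Metric.ball γi δ, ‖fM x γ' - fM x γi‖ ≤ 2 * M₂ := by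
      intro x γ' hγ'
      calc ‖fM x γ' - fM x γi‖ ≤ ‖fM x γ'‖ + ‖fM x γi‖ := norm_sub_le _ _
        _ ≤ M₂ + M₂ := add_le_add (hfMle x γ' hγ'.1) (hfMle x γi hγi)
        _ = 2 * M₂ := by ring
    have h2M₂ : (0:ℝ) ≤ 2 * M₂ := by linarith
    refine ⟨?_, fun x => Stmt8Aux.biSup_nonneg (fun γ' => norm_nonneg _),
      fun x => Stmt8Aux.biSup_le h2M₂ (hb x),
      fun x γ' hγ' => Stmt8Aux.le_biSup h2M₂ (hb x) hγ'⟩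
    exact Stmt8Aux.measurable_biSup (g := fun x γ' => ‖fM x γ' - fM x γi‖)
      ((hfMjm.sub ((hfMm γi).comp measurable_fst)).norm) hsne
      (fun _ _ => norm_nonneg _) hcont' (fun x => ⟨2 * M₂, h2M₂, hb x⟩)
  -- choice of radii
  have hδch : ∀ γi : EuclideanSpace ℝ (Fin g), γi ∈ K → ∃ δ : ℝ, 0 < δ ∧
      ∫ x, (⨆ γ', ⨆ _ : γ' ∈ K ∩ Metric.ball γi δ, ‖fM x γ' - fM x γi‖) ∂ν ≤ ε := by
    intro γi hγi
    have hpos : ∀ n : ℕ, (0:ℝ) < 1/(n+1) := fun n => by positivity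
    have hWfacts := fun n : ℕ => hWblock γi hγi (1/(n+1)) (hpos n)
    have hlimx : ∀ x, Tendsto
        (fun n : ℕ => ⨆ γ', ⨆ _ : γ' ∈ K ∩ Metric.ball γi (1/(n+1)), ‖fM x γ' - fM x γi‖)
        atTop (𝓝 0) := by
      intro x
      rw [Metric.tendsto_atTop]
      intro ε' hε'
      have hcw : ContinuousWithinAt (fM x) K γi := (hfMcont x) γi hγi
      rw [Metric.continuousWithinAt_iff] at hcw
      obtain ⟨δ₀, hδ₀, hcws⟩ := hcw (ε'/2) (by positivity)
      obtain ⟨N, hN⟩ := exists_nat_gt (1/δ₀)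
      refine ⟨N, fun n hn => ?_⟩
      have hn1 : (1:ℝ)/δ₀ < (n:ℝ) + 1 := by
        refine lt_of_lt_of_le hN ?_
        have : (N:ℝ) ≤ (n:ℝ) := Nat.cast_le.2 hn
        linarith
      have h1n : 1/((n:ℝ)+1) < δ₀ := by
        rw [div_lt_iff₀ (by positivity : (0:ℝ) < (n:ℝ)+1)]
        have h4 := (div_lt_iff₀ hδ₀).1 hn1
        linarith [h4]
      have hle : (⨆ γ', ⨆ _ : γ' ∈ K ∩ Metric.ball γi (1/(n+1)), ‖fM x γ' - fM x γi‖) ≤ ε'/2 := by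
        apply Stmt8Aux.biSup_le (by positivity)
        intro γ' hγ'
        have hd : dist γ' γi < δ₀ := lt_trans (Metric.mem_ball.1 hγ'.2) h1n
        have h5 := hcws hγ'.1 hd
        rw [dist_eq_norm] at h5
        exact h5.le
      rw [Real.dist_eq, sub_zero, abs_of_nonneg ((hWfacts n).2.1 x)]
      exact lt_of_le_of_lt hle (by linarith)
    have hdct := tendsto_integral_of_dominated_convergence (μ := ν)
      (F := fun (n : ℕ) x => ⨆ γ', ⨆ _ : γ' ∈ K ∩ Metric.ball γi (1/(n+1)), ‖fM x γ' - fM x γi‖)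
      (f := fun _ => (0:ℝ)) (bound := fun _ => 2 * M₂)
      (fun n => ((hWfacts n).1).aestronglyMeasurable)
      (integrable_const _)
      (fun n => Eventually.of_forall fun x => by
        rw [Real.norm_of_nonneg ((hWfacts n).2.1 x)]
        exact (hWfacts n).2.2.1 x)
      (Eventually.of_forall hlimx)
    rw [integral_zero] at hdct
    have hev := hdct.eventually (eventually_lt_nhds hε)
    obtain ⟨n, hn⟩ := hev.exists
    exact ⟨1/(n+1), hpos n, hn.le⟩
  choose δc hδcpos hδcint using hδch
  obtain ⟨tF, htF⟩ := hKcomp.elim_nhds_subcover'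
    (fun γi hγi => Metric.ball γi (δc γi hγi))
    (fun γi hγi => Metric.ball_mem_nhds _ (hδcpos γi hγi))
  have hWi := fun (i : ↥K) => hWblock (i : EuclideanSpace ℝ (Fin g)) i.2
    (δc (i : EuclideanSpace ℝ (Fin g)) i.2) (hδcpos (i : EuclideanSpace ℝ (Fin g)) i.2)
  have hWνint : ∀ i : ↥K, Integrable
      (fun x => ⨆ γ', ⨆ _ : γ' ∈ K ∩ Metric.ball (i : EuclideanSpace ℝ (Fin g))
        (δc (i : EuclideanSpace ℝ (Fin g)) i.2), ‖fM x γ' - fM x (i : EuclideanSpace ℝ (Fin g))‖) ν := by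
    intro i
    refine (integrable_const (2 * M₂)).mono' ((hWi i).1).aestronglyMeasurable ?_
    refine Eventually.of_forall fun x => ?_
    rw [Real.norm_of_nonneg ((hWi i).2.1 x)]
    exact (hWi i).2.2.1 x
  have hsumW : Tendsto (fun T => ∑ i ∈ tF, ∫ ω,
      |T⁻¹ * (∫ t in Set.Ioc (0:ℝ) T,
        (⨆ γ', ⨆ _ : γ' ∈ K ∩ Metric.ball (i : EuclideanSpace ℝ (Fin g))
          (δc (i : EuclideanSpace ℝ (Fin g)) i.2),
          ‖fM (X t ω) γ' - fM (X t ω) (i : EuclideanSpace ℝ (Fin g))‖))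
        - ∫ x, (⨆ γ', ⨆ _ : γ' ∈ K ∩ Metric.ball (i : EuclideanSpace ℝ (Fin g))
          (δc (i : EuclideanSpace ℝ (Fin g)) i.2),
          ‖fM x γ' - fM x (i : EuclideanSpace ℝ (Fin g))‖) ∂ν| ∂P) atTop (𝓝 0) := by
    have h1 := tendsto_finset_sum tF (fun i _ => hl1
      (fun x => ⨆ γ', ⨆ _ : γ' ∈ K ∩ Metric.ball (i : EuclideanSpace ℝ (Fin g))
        (δc (i : EuclideanSpace ℝ (Fin g)) i.2), ‖fM x γ' - fM x (i : EuclideanSpace ℝ (Fin g))‖)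
      (hWi i).1 (2 * M₂)
      (fun x => by rw [abs_of_nonneg ((hWi i).2.1 x)]; exact (hWi i).2.2.1 x))
    simpa using h1
  have hsumB : Tendsto (fun T => ∑ i ∈ tF, ∫ ω,
      ‖T⁻¹ • (∫ t in Set.Ioc (0:ℝ) T, fM (X t ω) (i : EuclideanSpace ℝ (Fin g)))
        - ∫ x, fM x (i : EuclideanSpace ℝ (Fin g)) ∂ν‖ ∂P) atTop (𝓝 0) := by
    have h1 := tendsto_finset_sum tF (fun i _ => hl4
      (fun x => fM x (i : EuclideanSpace ℝ (Fin g))) (hfMm _) M₂ (fun x => hfMle x _ i.2))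
    simpa using h1
  have hevW := hsumW.eventually (eventually_lt_nhds hε)
  have hevB := hsumB.eventually (eventually_lt_nhds hε)
  have hfinal : ∀ᶠ T in atTop, dist (∫ ω, (⨆ (γ : EuclideanSpace ℝ (Fin g)) (_ : γ ∈ G),
      ‖T⁻¹ • (∫ t in Set.Ioc (0 : ℝ) T, f (X t ω) γ) - ∫ x, f x γ ∂ν‖) ∂P) 0 < ε₀ := by
    filter_upwards [hevW, hevB, eventually_ge_atTop (1:ℝ)] with T hTW hTB hT1
    have hT0 : 0 < T := lt_of_lt_of_le one_pos hT1
    haveI := hfinIoc T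
    have hφmF : Measurable fun p : Ω × ℝ => F (X p.2 p.1) :=
      hFmeas.comp (hXmeas.comp measurable_swap)
    obtain ⟨hsecF, hIavgF, hEavgF⟩ := Stmt8Aux.fub P (fun t ω => F (X t ω)) hφmF
      (fun t ω => hF0 _) hT0 (fun t ht' => hInt' t ht'.1.le) (fun t ht' => hEF t ht'.1.le)
    have hφmG : Measurable fun p : Ω × ℝ => Gm (X p.2 p.1) :=
      hGmm.comp (hXmeas.comp measurable_swap)
    obtain ⟨hsecG, hIavgG, hEavgG⟩ := Stmt8Aux.fub P (fun t ω => Gm (X t ω)) hφmG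
      (fun t ω => hGm0 _) hT0 (fun t ht' => hminint _ hGmm hGm0 hGmF t ht'.1.le)
      (fun t ht' => hEGm t ht'.1.le)
    -- integrability of the pieces of the majorant
    have hIvec : ∀ i : ↥K, Integrable (fun ω =>
        ‖T⁻¹ • (∫ t in Set.Ioc (0:ℝ) T, fM (X t ω) (i : EuclideanSpace ℝ (Fin g)))
          - ∫ x, fM x (i : EuclideanSpace ℝ (Fin g)) ∂ν‖) P := by
      intro i
      have hm1 : Measurable fun ω => ∫ t in Set.Ioc (0:ℝ) T,
          fM (X t ω) (i : EuclideanSpace ℝ (Fin g)) :=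
        (((hfMm _).comp (hXmeas.comp measurable_swap)).stronglyMeasurable.integral_prod_right'
          (ν := volume.restrict (Set.Ioc (0:ℝ) T))).measurable
      refine (integrable_const (M₂ + M₂)).mono'
        (((hm1.const_smul T⁻¹).sub measurable_const).norm.aestronglyMeasurable) ?_
      refine Eventually.of_forall fun ω => ?_
      rw [Real.norm_of_nonneg (norm_nonneg _)]
      refine le_trans (norm_sub_le _ _) (add_le_add ?_ ?_)
      · rw [norm_smul, Real.norm_eq_abs, abs_of_nonneg (inv_nonneg.2 hT0.le)]
        have hb : ‖∫ t in Set.Ioc (0:ℝ) T, fM (X t ω) (i : EuclideanSpace ℝ (Fin g))‖ ≤ M₂ * T := by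
          have h1 : volume (Set.Ioc (0:ℝ) T) < ⊤ := by
            rw [Real.volume_Ioc]; exact ENNReal.ofReal_lt_top
          have h2 := norm_setIntegral_le_of_norm_le_const h1
            (f := fun t => fM (X t ω) (i : EuclideanSpace ℝ (Fin g))) (C := M₂)
            (fun t _ => hfMle _ _ i.2)
          rwa [measureReal_def, Real.volume_Ioc, sub_zero, ENNReal.toReal_ofReal hT0.le] at h2
        calc T⁻¹ * ‖∫ t in Set.Ioc (0:ℝ) T, fM (X t ω) (i : EuclideanSpace ℝ (Fin g))‖
            ≤ T⁻¹ * (M₂ * T) := mul_le_mul_of_nonneg_left hb (inv_nonneg.2 hT0.le)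
          _ = M₂ := by field_simp
      · have := norm_integral_le_of_norm_le_const (μ := ν)
          (f := fun x => fM x (i : EuclideanSpace ℝ (Fin g))) (C := M₂)
          (Eventually.of_forall fun x => hfMle x _ i.2)
        simpa [measure_univ] using this
    have hIW : ∀ i : ↥K, Integrable (fun ω =>
        |T⁻¹ * (∫ t in Set.Ioc (0:ℝ) T,
          (⨆ γ', ⨆ _ : γ' ∈ K ∩ Metric.ball (i : EuclideanSpace ℝ (Fin g))
            (δc (i : EuclideanSpace ℝ (Fin g)) i.2),
            ‖fM (X t ω) γ' - fM (X t ω) (i : EuclideanSpace ℝ (Fin g))‖))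
          - ∫ x, (⨆ γ', ⨆ _ : γ' ∈ K ∩ Metric.ball (i : EuclideanSpace ℝ (Fin g))
            (δc (i : EuclideanSpace ℝ (Fin g)) i.2),
            ‖fM x γ' - fM x (i : EuclideanSpace ℝ (Fin g))‖) ∂ν|) P := by
      intro i
      have hm1 : Measurable fun ω => ∫ t in Set.Ioc (0:ℝ) T,
          (⨆ γ', ⨆ _ : γ' ∈ K ∩ Metric.ball (i : EuclideanSpace ℝ (Fin g))
            (δc (i : EuclideanSpace ℝ (Fin g)) i.2),
            ‖fM (X t ω) γ' - fM (X t ω) (i : EuclideanSpace ℝ (Fin g))‖) :=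
        (((hWi i).1.comp (hXmeas.comp measurable_swap)).stronglyMeasurable.integral_prod_right'
          (ν := volume.restrict (Set.Ioc (0:ℝ) T))).measurable
      refine (integrable_const (T⁻¹ * (2 * M₂ * T) + 2 * M₂)).mono'
        (((measurable_const.mul hm1).sub measurable_const).abs.aestronglyMeasurable) ?_
      refine Eventually.of_forall fun ω => ?_
      rw [Real.norm_eq_abs, abs_abs]
      refine le_trans (abs_sub _ _) (add_le_add ?_ ?_)
      · rw [abs_mul, abs_of_nonneg (inv_nonneg.2 hT0.le)]
        refine mul_le_mul_of_nonneg_left ?_ (inv_nonneg.2 hT0.le)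
        have h1 : volume (Set.Ioc (0:ℝ) T) < ⊤ := by
          rw [Real.volume_Ioc]; exact ENNReal.ofReal_lt_top
        have h2 := norm_setIntegral_le_of_norm_le_const h1
          (f := fun t => ⨆ γ', ⨆ _ : γ' ∈ K ∩ Metric.ball (i : EuclideanSpace ℝ (Fin g))
            (δc (i : EuclideanSpace ℝ (Fin g)) i.2),
            ‖fM (X t ω) γ' - fM (X t ω) (i : EuclideanSpace ℝ (Fin g))‖) (C := 2 * M₂)
          (fun t _ => by
            rw [Real.norm_of_nonneg ((hWi i).2.1 _)]
            exact (hWi i).2.2.1 _)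
        rw [measureReal_def, Real.volume_Ioc, sub_zero, ENNReal.toReal_ofReal hT0.le] at h2
        rw [Real.norm_eq_abs] at h2
        exact h2
      · have := norm_integral_le_of_norm_le_const (μ := ν)
          (f := fun x => ⨆ γ', ⨆ _ : γ' ∈ K ∩ Metric.ball (i : EuclideanSpace ℝ (Fin g))
            (δc (i : EuclideanSpace ℝ (Fin g)) i.2),
            ‖fM x γ' - fM x (i : EuclideanSpace ℝ (Fin g))‖) (C := 2 * M₂)
          (Eventually.of_forall fun x => by
            rw [Real.norm_of_nonneg ((hWi i).2.1 x)]
            exact (hWi i).2.2.1 x)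
        rw [Real.norm_eq_abs] at this
        simpa [measure_univ] using this
    -- the majorant
    set R : Ω → ℝ := fun ω =>
      (∑ i ∈ tF, ‖T⁻¹ • (∫ t in Set.Ioc (0:ℝ) T, fM (X t ω) (i : EuclideanSpace ℝ (Fin g)))
        - ∫ x, fM x (i : EuclideanSpace ℝ (Fin g)) ∂ν‖)
      + (∑ i ∈ tF, |T⁻¹ * (∫ t in Set.Ioc (0:ℝ) T,
          (⨆ γ', ⨆ _ : γ' ∈ K ∩ Metric.ball (i : EuclideanSpace ℝ (Fin g))
            (δc (i : EuclideanSpace ℝ (Fin g)) i.2),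
            ‖fM (X t ω) γ' - fM (X t ω) (i : EuclideanSpace ℝ (Fin g))‖))
          - ∫ x, (⨆ γ', ⨆ _ : γ' ∈ K ∩ Metric.ball (i : EuclideanSpace ℝ (Fin g))
            (δc (i : EuclideanSpace ℝ (Fin g)) i.2),
            ‖fM x γ' - fM x (i : EuclideanSpace ℝ (Fin g))‖) ∂ν|)
      + T⁻¹ * (∫ t in Set.Ioc (0:ℝ) T, Gm (X t ω)) + 3 * ε with hRdef
    have hR0 : ∀ ω, 0 ≤ R ω := by
      intro ω
      rw [hRdef]; dsimp only
      refine add_nonneg (add_nonneg (add_nonneg ?_ ?_) ?_) (by linarith)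
      · exact Finset.sum_nonneg fun i _ => norm_nonneg _
      · exact Finset.sum_nonneg fun i _ => abs_nonneg _
      · exact mul_nonneg (inv_nonneg.2 hT0.le) (integral_nonneg fun t => hGm0 _)
    have hRint : Integrable R P :=
      (((integrable_finset_sum tF fun i _ => hIvec i).add
        (integrable_finset_sum tF fun i _ => hIW i)).add
        (hIavgG.const_mul T⁻¹)).add (integrable_const _)
    have hptS : ∀ᵐ ω ∂P, (⨆ (γ : EuclideanSpace ℝ (Fin g)) (_ : γ ∈ G),
        ‖T⁻¹ • (∫ t in Set.Ioc (0 : ℝ) T, f (X t ω) γ) - ∫ x, f x γ ∂ν‖) ≤ R ω := by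
      filter_upwards [hsecF] with ω hFω
      have hItf : ∀ γ ∈ G, Integrable (fun t => f (X t ω) γ)
          (volume.restrict (Set.Ioc (0:ℝ) T)) := by
        intro γ hγ
        refine hFω.mono' (((hfγ γ).comp (hXsec ω)).aestronglyMeasurable) ?_
        exact Eventually.of_forall fun t => hFle _ γ hγ
      have hItfM : ∀ γ ∈ K, Integrable (fun t => fM (X t ω) γ)
          (volume.restrict (Set.Ioc (0:ℝ) T)) := by
        intro γ hγ
        exact (integrable_const M₂).mono' (((hfMm γ).comp (hXsec ω)).aestronglyMeasurable)
          (Eventually.of_forall fun t => hfMle _ γ hγ)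
      have hItGm : Integrable (fun t => Gm (X t ω)) (volume.restrict (Set.Ioc (0:ℝ) T)) := by
        refine hFω.mono' ((hGmm.comp (hXsec ω)).aestronglyMeasurable) ?_
        exact Eventually.of_forall fun t => by
          rw [Real.norm_of_nonneg (hGm0 _)]; exact hGmF _
      refine Real.iSup_le (fun γ => Real.iSup_le (fun hγ => ?_) (hR0 ω)) (hR0 ω)
      obtain ⟨i, hitF, hγball⟩ := Set.mem_iUnion₂.1 (htF (hGK hγ))
      have hγs : γ ∈ K ∩ Metric.ball (i : EuclideanSpace ℝ (Fin g))
          (δc (i : EuclideanSpace ℝ (Fin g)) i.2) := ⟨hGK hγ, hγball⟩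
      have hItW : Integrable (fun t =>
          ⨆ γ', ⨆ _ : γ' ∈ K ∩ Metric.ball (i : EuclideanSpace ℝ (Fin g))
            (δc (i : EuclideanSpace ℝ (Fin g)) i.2),
            ‖fM (X t ω) γ' - fM (X t ω) (i : EuclideanSpace ℝ (Fin g))‖)
          (volume.restrict (Set.Ioc (0:ℝ) T)) := by
        refine (integrable_const (2*M₂)).mono'
          (((hWi i).1.comp (hXsec ω)).aestronglyMeasurable) ?_
        exact Eventually.of_forall fun t => by
          rw [Real.norm_of_nonneg ((hWi i).2.1 _)]; exact (hWi i).2.2.1 _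
      have hsplit : T⁻¹ • (∫ t in Set.Ioc (0:ℝ) T, f (X t ω) γ) - ∫ x, f x γ ∂ν
          = (T⁻¹ • (∫ t in Set.Ioc (0:ℝ) T, (f (X t ω) γ - fM (X t ω) γ)))
            + (T⁻¹ • (∫ t in Set.Ioc (0:ℝ) T,
                (fM (X t ω) γ - fM (X t ω) (i : EuclideanSpace ℝ (Fin g)))))
            + (T⁻¹ • (∫ t in Set.Ioc (0:ℝ) T, fM (X t ω) (i : EuclideanSpace ℝ (Fin g)))
                - ∫ x, fM x (i : EuclideanSpace ℝ (Fin g)) ∂ν)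
            + ((∫ x, fM x (i : EuclideanSpace ℝ (Fin g)) ∂ν) - ∫ x, fM x γ ∂ν)
            + ((∫ x, fM x γ ∂ν) - ∫ x, f x γ ∂ν) := by
        rw [integral_sub (hItf γ hγ) (hItfM γ (hGK hγ)),
          integral_sub (hItfM γ (hGK hγ)) (hItfM _ i.2), smul_sub, smul_sub]
        abel
      have hAbd : ‖T⁻¹ • (∫ t in Set.Ioc (0:ℝ) T, (f (X t ω) γ - fM (X t ω) γ))‖
          ≤ T⁻¹ * (∫ t in Set.Ioc (0:ℝ) T, Gm (X t ω)) := by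
        rw [norm_smul, Real.norm_eq_abs, abs_of_nonneg (inv_nonneg.2 hT0.le)]
        refine mul_le_mul_of_nonneg_left ?_ (inv_nonneg.2 hT0.le)
        refine le_trans (norm_integral_le_integral_norm _) ?_
        refine integral_mono ((hItf γ hγ).sub (hItfM γ (hGK hγ))).norm hItGm ?_
        exact fun t => hdiff (X t ω) γ (hGK hγ)
      have hBbd : ‖T⁻¹ • (∫ t in Set.Ioc (0:ℝ) T,
          (fM (X t ω) γ - fM (X t ω) (i : EuclideanSpace ℝ (Fin g))))‖
          ≤ |T⁻¹ * (∫ t in Set.Ioc (0:ℝ) T,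
              (⨆ γ', ⨆ _ : γ' ∈ K ∩ Metric.ball (i : EuclideanSpace ℝ (Fin g))
                (δc (i : EuclideanSpace ℝ (Fin g)) i.2),
                ‖fM (X t ω) γ' - fM (X t ω) (i : EuclideanSpace ℝ (Fin g))‖))
              - ∫ x, (⨆ γ', ⨆ _ : γ' ∈ K ∩ Metric.ball (i : EuclideanSpace ℝ (Fin g))
                (δc (i : EuclideanSpace ℝ (Fin g)) i.2),
                ‖fM x γ' - fM x (i : EuclideanSpace ℝ (Fin g))‖) ∂ν| + ε := by
        have h1 : ‖T⁻¹ • (∫ t in Set.Ioc (0:ℝ) T,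
            (fM (X t ω) γ - fM (X t ω) (i : EuclideanSpace ℝ (Fin g))))‖
            ≤ T⁻¹ * (∫ t in Set.Ioc (0:ℝ) T,
              (⨆ γ', ⨆ _ : γ' ∈ K ∩ Metric.ball (i : EuclideanSpace ℝ (Fin g))
                (δc (i : EuclideanSpace ℝ (Fin g)) i.2),
                ‖fM (X t ω) γ' - fM (X t ω) (i : EuclideanSpace ℝ (Fin g))‖)) := by
          rw [norm_smul, Real.norm_eq_abs, abs_of_nonneg (inv_nonneg.2 hT0.le)]
          refine mul_le_mul_of_nonneg_left ?_ (inv_nonneg.2 hT0.le)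
          refine le_trans (norm_integral_le_integral_norm _) ?_
          refine integral_mono ((hItfM γ (hGK hγ)).sub (hItfM _ i.2)).norm hItW ?_
          exact fun t => (hWi i).2.2.2 (X t ω) γ hγs
        have h2 : ∫ x, (⨆ γ', ⨆ _ : γ' ∈ K ∩ Metric.ball (i : EuclideanSpace ℝ (Fin g))
            (δc (i : EuclideanSpace ℝ (Fin g)) i.2),
            ‖fM x γ' - fM x (i : EuclideanSpace ℝ (Fin g))‖) ∂ν ≤ ε :=
          hδcint (i : EuclideanSpace ℝ (Fin g)) i.2
        have h3 := le_abs_self (T⁻¹ * (∫ t in Set.Ioc (0:ℝ) T,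
            (⨆ γ', ⨆ _ : γ' ∈ K ∩ Metric.ball (i : EuclideanSpace ℝ (Fin g))
              (δc (i : EuclideanSpace ℝ (Fin g)) i.2),
              ‖fM (X t ω) γ' - fM (X t ω) (i : EuclideanSpace ℝ (Fin g))‖))
            - ∫ x, (⨆ γ', ⨆ _ : γ' ∈ K ∩ Metric.ball (i : EuclideanSpace ℝ (Fin g))
              (δc (i : EuclideanSpace ℝ (Fin g)) i.2),
              ‖fM x γ' - fM x (i : EuclideanSpace ℝ (Fin g))‖) ∂ν)
        linarith
      have hCbd : ‖T⁻¹ • (∫ t in Set.Ioc (0:ℝ) T, fM (X t ω) (i : EuclideanSpace ℝ (Fin g)))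
          - ∫ x, fM x (i : EuclideanSpace ℝ (Fin g)) ∂ν‖
          ≤ ∑ i' ∈ tF, ‖T⁻¹ • (∫ t in Set.Ioc (0:ℝ) T,
              fM (X t ω) (i' : EuclideanSpace ℝ (Fin g)))
            - ∫ x, fM x (i' : EuclideanSpace ℝ (Fin g)) ∂ν‖ :=
        Finset.single_le_sum (f := fun i' : ↥K => ‖T⁻¹ • (∫ t in Set.Ioc (0:ℝ) T,
            fM (X t ω) (i' : EuclideanSpace ℝ (Fin g)))
          - ∫ x, fM x (i' : EuclideanSpace ℝ (Fin g)) ∂ν‖)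
          (fun i' _ => norm_nonneg _) hitF
      have hWsingle : |T⁻¹ * (∫ t in Set.Ioc (0:ℝ) T,
          (⨆ γ', ⨆ _ : γ' ∈ K ∩ Metric.ball (i : EuclideanSpace ℝ (Fin g))
            (δc (i : EuclideanSpace ℝ (Fin g)) i.2),
            ‖fM (X t ω) γ' - fM (X t ω) (i : EuclideanSpace ℝ (Fin g))‖))
          - ∫ x, (⨆ γ', ⨆ _ : γ' ∈ K ∩ Metric.ball (i : EuclideanSpace ℝ (Fin g))
            (δc (i : EuclideanSpace ℝ (Fin g)) i.2),
            ‖fM x γ' - fM x (i : EuclideanSpace ℝ (Fin g))‖) ∂ν|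
          ≤ ∑ i' ∈ tF, |T⁻¹ * (∫ t in Set.Ioc (0:ℝ) T,
            (⨆ γ', ⨆ _ : γ' ∈ K ∩ Metric.ball (i' : EuclideanSpace ℝ (Fin g))
              (δc (i' : EuclideanSpace ℝ (Fin g)) i'.2),
              ‖fM (X t ω) γ' - fM (X t ω) (i' : EuclideanSpace ℝ (Fin g))‖))
            - ∫ x, (⨆ γ', ⨆ _ : γ' ∈ K ∩ Metric.ball (i' : EuclideanSpace ℝ (Fin g))
              (δc (i' : EuclideanSpace ℝ (Fin g)) i'.2),
              ‖fM x γ' - fM x (i' : EuclideanSpace ℝ (Fin g))‖) ∂ν| :=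
        Finset.single_le_sum (f := fun i' : ↥K => |T⁻¹ * (∫ t in Set.Ioc (0:ℝ) T,
            (⨆ γ', ⨆ _ : γ' ∈ K ∩ Metric.ball (i' : EuclideanSpace ℝ (Fin g))
              (δc (i' : EuclideanSpace ℝ (Fin g)) i'.2),
              ‖fM (X t ω) γ' - fM (X t ω) (i' : EuclideanSpace ℝ (Fin g))‖))
            - ∫ x, (⨆ γ', ⨆ _ : γ' ∈ K ∩ Metric.ball (i' : EuclideanSpace ℝ (Fin g))
              (δc (i' : EuclideanSpace ℝ (Fin g)) i'.2),
              ‖fM x γ' - fM x (i' : EuclideanSpace ℝ (Fin g))‖) ∂ν|)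
          (fun i' _ => abs_nonneg _) hitF
      have hDbd : ‖(∫ x, fM x (i : EuclideanSpace ℝ (Fin g)) ∂ν) - ∫ x, fM x γ ∂ν‖ ≤ ε := by
        rw [← integral_sub (hfMνint _ i.2) (hfMνint γ (hGK hγ))]
        refine le_trans (norm_integral_le_integral_norm _)
          (le_trans ?_ (hδcint (i : EuclideanSpace ℝ (Fin g)) i.2))
        refine integral_mono ((hfMνint _ i.2).sub (hfMνint γ (hGK hγ))).norm (hWνint i) ?_
        intro x
        dsimp only
        rw [norm_sub_rev]
        exact (hWi i).2.2.2 x γ hγs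
      have hEbd : ‖(∫ x, fM x γ ∂ν) - ∫ x, f x γ ∂ν‖ ≤ ε := by
        rw [← integral_sub (hfMνint γ (hGK hγ)) (hfνint γ (hGK hγ))]
        refine le_trans (norm_integral_le_integral_norm _) (le_trans ?_ hGmνle)
        refine integral_mono ((hfMνint γ (hGK hγ)).sub (hfνint γ (hGK hγ))).norm hGmν ?_
        intro x
        dsimp only
        rw [norm_sub_rev]
        exact hdiff x γ (hGK hγ)
      rw [hsplit]
      have hnorm5 : ∀ a b c dd e : EuclideanSpace ℝ (Fin m),
          ‖a + b + c + dd + e‖ ≤ ‖a‖ + ‖b‖ + ‖c‖ + ‖dd‖ + ‖e‖ := by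
        intro a b c dd e
        calc ‖a + b + c + dd + e‖ ≤ ‖a + b + c + dd‖ + ‖e‖ := norm_add_le _ _
          _ ≤ (‖a + b + c‖ + ‖dd‖) + ‖e‖ := by linarith [norm_add_le (a + b + c) dd]
          _ ≤ ((‖a + b‖ + ‖c‖) + ‖dd‖) + ‖e‖ :=
              by linarith [norm_add_le (a + b) c]
          _ ≤ (((‖a‖ + ‖b‖) + ‖c‖) + ‖dd‖) + ‖e‖ :=
              by linarith [norm_add_le a b]
      refine le_trans (hnorm5 _ _ _ _ _) ?_
      rw [hRdef]; dsimp only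
      linarith [hAbd, hBbd, hCbd, hDbd, hEbd, hWsingle]
    -- conclude
    have hS0 : 0 ≤ ∫ ω, (⨆ (γ : EuclideanSpace ℝ (Fin g)) (_ : γ ∈ G),
        ‖T⁻¹ • (∫ t in Set.Ioc (0 : ℝ) T, f (X t ω) γ) - ∫ x, f x γ ∂ν‖) ∂P :=
      integral_nonneg fun ω => Stmt8Aux.biSup_nonneg fun γ => norm_nonneg _
    have hSle : ∫ ω, (⨆ (γ : EuclideanSpace ℝ (Fin g)) (_ : γ ∈ G),
        ‖T⁻¹ • (∫ t in Set.Ioc (0 : ℝ) T, f (X t ω) γ) - ∫ x, f x γ ∂ν‖) ∂P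
        ≤ ∫ ω, R ω ∂P :=
      integral_mono_of_nonneg
        (Eventually.of_forall fun ω => Stmt8Aux.biSup_nonneg fun γ => norm_nonneg _) hRint hptS
    have hRval : ∫ ω, R ω ∂P < 6 * ε := by
      have hint1 : Integrable (fun ω => ∑ i ∈ tF,
          ‖T⁻¹ • (∫ t in Set.Ioc (0:ℝ) T, fM (X t ω) (i : EuclideanSpace ℝ (Fin g)))
            - ∫ x, fM x (i : EuclideanSpace ℝ (Fin g)) ∂ν‖) P :=
        integrable_finset_sum tF fun i _ => hIvec i
      have hint2 : Integrable (fun ω => ∑ i ∈ tF, |T⁻¹ * (∫ t in Set.Ioc (0:ℝ) T,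
          (⨆ γ', ⨆ _ : γ' ∈ K ∩ Metric.ball (i : EuclideanSpace ℝ (Fin g))
            (δc (i : EuclideanSpace ℝ (Fin g)) i.2),
            ‖fM (X t ω) γ' - fM (X t ω) (i : EuclideanSpace ℝ (Fin g))‖))
          - ∫ x, (⨆ γ', ⨆ _ : γ' ∈ K ∩ Metric.ball (i : EuclideanSpace ℝ (Fin g))
            (δc (i : EuclideanSpace ℝ (Fin g)) i.2),
            ‖fM x γ' - fM x (i : EuclideanSpace ℝ (Fin g))‖) ∂ν|) P :=
        integrable_finset_sum tF fun i _ => hIW i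
      have hint3 : Integrable (fun ω => T⁻¹ * (∫ t in Set.Ioc (0:ℝ) T, Gm (X t ω))) P :=
        hIavgG.const_mul T⁻¹
      have h1 : ∫ ω, R ω ∂P = (∫ ω, (∑ i ∈ tF,
          ‖T⁻¹ • (∫ t in Set.Ioc (0:ℝ) T, fM (X t ω) (i : EuclideanSpace ℝ (Fin g)))
            - ∫ x, fM x (i : EuclideanSpace ℝ (Fin g)) ∂ν‖) ∂P)
          + (∫ ω, (∑ i ∈ tF, |T⁻¹ * (∫ t in Set.Ioc (0:ℝ) T,
            (⨆ γ', ⨆ _ : γ' ∈ K ∩ Metric.ball (i : EuclideanSpace ℝ (Fin g))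
              (δc (i : EuclideanSpace ℝ (Fin g)) i.2),
              ‖fM (X t ω) γ' - fM (X t ω) (i : EuclideanSpace ℝ (Fin g))‖))
            - ∫ x, (⨆ γ', ⨆ _ : γ' ∈ K ∩ Metric.ball (i : EuclideanSpace ℝ (Fin g))
              (δc (i : EuclideanSpace ℝ (Fin g)) i.2),
              ‖fM x γ' - fM x (i : EuclideanSpace ℝ (Fin g))‖) ∂ν|) ∂P)
          + (∫ ω, T⁻¹ * (∫ t in Set.Ioc (0:ℝ) T, Gm (X t ω)) ∂P) + 3 * ε := by
        simp only [hRdef]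
        have hint12 : Integrable (fun ω => (∑ i ∈ tF,
            ‖T⁻¹ • (∫ t in Set.Ioc (0:ℝ) T, fM (X t ω) (i : EuclideanSpace ℝ (Fin g)))
              - ∫ x, fM x (i : EuclideanSpace ℝ (Fin g)) ∂ν‖)
            + (∑ i ∈ tF, |T⁻¹ * (∫ t in Set.Ioc (0:ℝ) T,
              (⨆ γ', ⨆ _ : γ' ∈ K ∩ Metric.ball (i : EuclideanSpace ℝ (Fin g))
                (δc (i : EuclideanSpace ℝ (Fin g)) i.2),
                ‖fM (X t ω) γ' - fM (X t ω) (i : EuclideanSpace ℝ (Fin g))‖))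
              - ∫ x, (⨆ γ', ⨆ _ : γ' ∈ K ∩ Metric.ball (i : EuclideanSpace ℝ (Fin g))
                (δc (i : EuclideanSpace ℝ (Fin g)) i.2),
                ‖fM x γ' - fM x (i : EuclideanSpace ℝ (Fin g))‖) ∂ν|)) P := hint1.add hint2
        have hint123 : Integrable (fun ω => (∑ i ∈ tF,
            ‖T⁻¹ • (∫ t in Set.Ioc (0:ℝ) T, fM (X t ω) (i : EuclideanSpace ℝ (Fin g)))
              - ∫ x, fM x (i : EuclideanSpace ℝ (Fin g)) ∂ν‖)
            + (∑ i ∈ tF, |T⁻¹ * (∫ t in Set.Ioc (0:ℝ) T,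
              (⨆ γ', ⨆ _ : γ' ∈ K ∩ Metric.ball (i : EuclideanSpace ℝ (Fin g))
                (δc (i : EuclideanSpace ℝ (Fin g)) i.2),
                ‖fM (X t ω) γ' - fM (X t ω) (i : EuclideanSpace ℝ (Fin g))‖))
              - ∫ x, (⨆ γ', ⨆ _ : γ' ∈ K ∩ Metric.ball (i : EuclideanSpace ℝ (Fin g))
                (δc (i : EuclideanSpace ℝ (Fin g)) i.2),
                ‖fM x γ' - fM x (i : EuclideanSpace ℝ (Fin g))‖) ∂ν|)
            + T⁻¹ * (∫ t in Set.Ioc (0:ℝ) T, Gm (X t ω))) P := hint12.add hint3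
        rw [integral_add hint123 (integrable_const _), integral_add hint12 hint3,
          integral_add hint1 hint2, integral_const]
        simp [measure_univ]
      rw [h1]
      have h2 : ∫ ω, T⁻¹ * (∫ t in Set.Ioc (0:ℝ) T, Gm (X t ω)) ∂P ≤ ε := by
        rw [integral_const_mul]
        calc T⁻¹ * ∫ ω, (∫ t in Set.Ioc (0:ℝ) T, Gm (X t ω)) ∂P ≤ T⁻¹ * (T * ε) :=
              mul_le_mul_of_nonneg_left hEavgG (inv_nonneg.2 hT0.le)
          _ = ε := by field_simp
      have h3 : ∫ ω, (∑ i ∈ tF,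
          ‖T⁻¹ • (∫ t in Set.Ioc (0:ℝ) T, fM (X t ω) (i : EuclideanSpace ℝ (Fin g)))
            - ∫ x, fM x (i : EuclideanSpace ℝ (Fin g)) ∂ν‖) ∂P < ε := by
        rw [integral_finset_sum tF fun i _ => hIvec i]
        exact hTB
      have h4 : ∫ ω, (∑ i ∈ tF, |T⁻¹ * (∫ t in Set.Ioc (0:ℝ) T,
          (⨆ γ', ⨆ _ : γ' ∈ K ∩ Metric.ball (i : EuclideanSpace ℝ (Fin g))
            (δc (i : EuclideanSpace ℝ (Fin g)) i.2),
            ‖fM (X t ω) γ' - fM (X t ω) (i : EuclideanSpace ℝ (Fin g))‖))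
          - ∫ x, (⨆ γ', ⨆ _ : γ' ∈ K ∩ Metric.ball (i : EuclideanSpace ℝ (Fin g))
            (δc (i : EuclideanSpace ℝ (Fin g)) i.2),
            ‖fM x γ' - fM x (i : EuclideanSpace ℝ (Fin g))‖) ∂ν|) ∂P < ε := by
        rw [integral_finset_sum tF fun i _ => hIW i]
        exact hTW
      linarith
    rw [Real.dist_eq, sub_zero, abs_of_nonneg hS0]
    calc ∫ ω, (⨆ (γ : EuclideanSpace ℝ (Fin g)) (_ : γ ∈ G),
        ‖T⁻¹ • (∫ t in Set.Ioc (0 : ℝ) T, f (X t ω) γ) - ∫ x, f x γ ∂ν‖) ∂P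
        ≤ ∫ ω, R ω ∂P := hSle
      _ < 6 * ε := hRval
      _ < ε₀ := by rw [hεdef]; linarith
  obtain ⟨N, hN⟩ := eventually_atTop.1 hfinal
  exact ⟨N, hN⟩
end

section
/- Assume [L1]: there exists α** ∈ (α* + Ker(A)) ∩ [0, M_α)^a which uniquely minimizes Pe on (α* + Ker(A)) ∩ [0, M_α]^a. Let 𝒥₁ = {j ∈ {1,…,a} : α**_j ≠ 0}. Then Ker(A) ∩ span{e_j : j ∈ 𝒥₁} = {0}. -/
open Finset

/-- first half of Lemma 6.5 of the paper. Assume `[L1]`: `α**` lies in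
`(α* + Ker A) ∩ [0,M_α)^a` and uniquely minimizes `Pe(α) = Σ_j κ_j |α_j|^q`
(`0 < q < 1`, `κ_j > 0`) on `(α* + Ker A) ∩ [0,M_α]^a`. With
`𝒥₁ = {j : α**_j ≠ 0}`, one has `Ker(A) ∩ span{e_j : j ∈ 𝒥₁} = {0}`. -/
theorem stmt10 (a r : ℕ) (hra : r < a)
    (A : Matrix (Fin a) (Fin r) ℝ) (hrank : A.rank = r)
    (q : ℝ) (hq0 : 0 < q) (hq1 : q < 1) (κ : Fin a → ℝ) (hκ : ∀ j, 0 < κ j)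
    (αstar : Fin a → ℝ) (hαstar : ∀ j, 0 ≤ αstar j) (Mα : ℝ) (hMα : 0 < Mα)
    (αss : Fin a → ℝ)
    (hmem : αss - αstar ∈ kerRow a r A) (hbox : ∀ j, 0 ≤ αss j ∧ αss j < Mα)
    (hmin : ∀ α : Fin a → ℝ, α - αstar ∈ kerRow a r A → (∀ j, 0 ≤ α j ∧ α j ≤ Mα) →
      α ≠ αss → ∑ j, κ j * |αss j| ^ q < ∑ j, κ j * |α j| ^ q) :
    kerRow a r A ⊓
        Submodule.span ℝ {v : Fin a → ℝ | ∃ j : Fin a, αss j ≠ 0 ∧ v = Pi.single j (1 : ℝ)} =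
      ⊥ := by
  rw [eq_bot_iff]
  rintro β hβmem
  obtain ⟨hker, hspan⟩ := Submodule.mem_inf.mp hβmem
  rw [Submodule.mem_bot]
  by_contra hβ
  -- β vanishes off the support of αss
  have hsupp : ∀ j, αss j = 0 → β j = 0 := by
    intro j hj
    have hle : Submodule.span ℝ {v : Fin a → ℝ | ∃ i : Fin a, αss i ≠ 0 ∧ v = Pi.single i (1 : ℝ)} ≤
        LinearMap.ker (LinearMap.proj j : (Fin a → ℝ) →ₗ[ℝ] ℝ) := by
      rw [Submodule.span_le]
      rintro v ⟨i, hi, rfl⟩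
      have hij : j ≠ i := fun h => hi (h ▸ hj)
      simp [LinearMap.mem_ker, Pi.single_eq_of_ne hij]
    exact hle hspan
  -- choose ε
  have hane : (Finset.univ : Finset (Fin a)).Nonempty := by
    have : 0 < a := lt_of_le_of_lt (Nat.zero_le r) hra
    exact ⟨⟨0, this⟩, Finset.mem_univ _⟩
  set f : Fin a → ℝ := fun j =>
    if β j = 0 then 1 else min (αss j) (Mα - αss j) / |β j| with hf
  set ε : ℝ := Finset.univ.inf' hane f with hεdef
  have hεpos : 0 < ε := by
    rw [hεdef, Finset.lt_inf'_iff]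
    intro j _
    by_cases h : β j = 0
    · simp [hf, h]
    · have hα0 : 0 < αss j := by
        rcases lt_or_eq_of_le (hbox j).1 with h' | h'
        · exact h'
        · exact absurd (hsupp j h'.symm) h
      have : 0 < min (αss j) (Mα - αss j) := lt_min hα0 (by linarith [(hbox j).2])
      simp only [hf, if_neg h]
      exact div_pos this (abs_pos.mpr h)
  have hεb : ∀ j, β j ≠ 0 → ε * |β j| ≤ αss j ∧ ε * |β j| ≤ Mα - αss j := by
    intro j hj
    have h1 : ε ≤ f j := Finset.inf'_le _ (Finset.mem_univ j)
    rw [hf] at h1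
    simp only [if_neg hj] at h1
    have h2 : ε * |β j| ≤ min (αss j) (Mα - αss j) :=
      (le_div_iff₀ (abs_pos.mpr hj)).mp h1
    exact ⟨h2.trans (min_le_left _ _), h2.trans (min_le_right _ _)⟩
  -- key bounds for perturbed points
  have hbound : ∀ (s : ℝ), |s| = 1 → ∀ j, 0 ≤ αss j + s * ε * β j ∧ αss j + s * ε * β j ≤ Mα := by
    intro s hs j
    by_cases h : β j = 0
    · simp [h]
      exact ⟨(hbox j).1, (hbox j).2.le⟩
    · obtain ⟨h1, h2⟩ := hεb j h
      have habs : |s * ε * β j| = ε * |β j| := by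
        rw [abs_mul, abs_mul, hs, one_mul, abs_of_pos hεpos]
      have hle := le_abs_self (s * ε * β j)
      have hge := neg_abs_le (s * ε * β j)
      constructor <;> [nlinarith; nlinarith]
  have hkermem : ∀ (s : ℝ), (fun j => αss j + s * ε * β j) - αstar ∈ kerRow a r A := by
    intro s
    have : (fun j => αss j + s * ε * β j) - αstar = (αss - αstar) + (s * ε) • β := by
      funext j; simp [mul_assoc]; ring
    rw [this]
    exact Submodule.add_mem _ hmem (Submodule.smul_mem _ _ hker)
  have hne : ∀ (s : ℝ), |s| = 1 → (fun j => αss j + s * ε * β j) ≠ αss := by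
    intro s hs h
    obtain ⟨j, hj⟩ := Function.ne_iff.mp hβ
    have hcf := congrFun h j
    have h2 : s * ε * β j = 0 := by linarith [hcf]
    have hs0 : s ≠ 0 := by intro h0; rw [h0] at hs; simp at hs
    rcases mul_eq_zero.mp h2 with h' | h'
    · rcases mul_eq_zero.mp h' with h'' | h''
      · exact hs0 h''
      · exact absurd h'' (ne_of_gt hεpos)
    · exact hj h'
  have hplus := hmin _ (hkermem 1) (hbound 1 (by norm_num)) (hne 1 (by norm_num))
  have hminus := hmin _ (hkermem (-1)) (hbound (-1) (by norm_num)) (hne (-1) (by norm_num))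
  -- concavity: per-coordinate estimate
  have hconc : ∀ j, κ j * |αss j + 1 * ε * β j| ^ q + κ j * |αss j + (-1) * ε * β j| ^ q ≤
      2 * (κ j * |αss j| ^ q) := by
    intro j
    set x := αss j + 1 * ε * β j with hx
    set y := αss j + (-1) * ε * β j with hy
    have hx0 : 0 ≤ x := (hbound 1 (by norm_num) j).1
    have hy0 : 0 ≤ y := (hbound (-1) (by norm_num) j).1
    have hmid : αss j = (1/2 : ℝ) • x + (1/2 : ℝ) • y := by
      rw [hx, hy]; simp; ring
    have hcc := (Real.concaveOn_rpow hq0.le hq1.le).2 hx0 hy0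
      (by norm_num : (0:ℝ) ≤ 1/2) (by norm_num : (0:ℝ) ≤ 1/2) (by norm_num)
    rw [← hmid] at hcc
    have habs : |αss j| = αss j := abs_of_nonneg (hbox j).1
    rw [abs_of_nonneg hx0, abs_of_nonneg hy0, habs]
    have hκj := (hκ j).le
    simp only [smul_eq_mul] at hcc
    nlinarith [hcc, Real.rpow_nonneg hx0 q, Real.rpow_nonneg hy0 q]
  have hsum : ∑ j, κ j * |αss j + 1 * ε * β j| ^ q + ∑ j, κ j * |αss j + (-1) * ε * β j| ^ q ≤
      2 * ∑ j, κ j * |αss j| ^ q := by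
    rw [← Finset.sum_add_distrib, Finset.mul_sum]
    exact Finset.sum_le_sum fun j _ => hconc j
  linarith
end

section
/- Assume [L1] and [L2]. Then the |𝒥₁| × |𝒥₁| matrix Γ̄ = ∫ ((x_i)_{i∈𝒥₁})^{⊗2} / (α*·x) · 1_{{α*·x > 0}} ν(dx) is non-degenerate (positive definite), where 𝒥₁ = {j : α**_j ≠ 0}. -/
open Finset MeasureTheory
open scoped Classical

lemma mid_rpow {q x y : ℝ} (hq0 : 0 < q) (hq1 : q < 1) (hx : 0 ≤ x) (hy : 0 ≤ y) :
    (x ^ q + y ^ q) / 2 ≤ ((x + y) / 2) ^ q := by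
  have h := (Real.concaveOn_rpow hq0.le hq1.le).2 (Set.mem_Ici.mpr hx) (Set.mem_Ici.mpr hy)
    (le_of_lt one_half_pos) (le_of_lt one_half_pos) (by norm_num : (1/2:ℝ)+1/2 = 1)
  simp only [smul_eq_mul] at h
  calc (x ^ q + y ^ q) / 2 = 1/2 * x ^ q + 1/2 * y ^ q := by ring
    _ ≤ (1/2 * x + 1/2 * y) ^ q := h
    _ = ((x + y)/2) ^ q := by ring_nf

/-- The matrix `A` of the multicollinearity relation: `A_{ij} = δ_{ij}` for `i ∈ D`
and `A_{ij} = b_{ij}` for `i ∈ Dᶜ` (columns indexed by `j ∈ D`). -/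
noncomputable def Amat (a : ℕ) (D : Finset (Fin a)) (b : Fin a → Fin a → ℝ) :
    Matrix (Fin a) ↥D ℝ :=
  Matrix.of fun i j => if i ∈ D then (if i = ↑j then (1 : ℝ) else 0) else b i ↑j

/-- The kernel `Ker(A) = {α : αA = 0}` of the row action `α ↦ αA`. -/
noncomputable def kerRowA (a : ℕ) (D : Finset (Fin a)) (b : Fin a → Fin a → ℝ) :
    Submodule ℝ (Fin a → ℝ) :=
  LinearMap.ker (Amat a D b).vecMulLinear

lemma rowsum (a : ℕ) (D : Finset (Fin a)) (b : Fin a → Fin a → ℝ) (x : Fin a → ℝ)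
    (hlin : ∀ i ∉ D, x i = ∑ j ∈ D, b i j * x j) (w : Fin a → ℝ) :
    ∑ i, w i * x i = ∑ j : ↥D, (Matrix.vecMul w (Amat a D b)) j * x ↑j := by
  have hA : ∀ i, ∑ j : ↥D, Amat a D b i j * x ↑j = x i := by
    intro i
    by_cases hi : i ∈ D
    · have h1 : ∀ j : ↥D, Amat a D b i j * x ↑j = if j = ⟨i, hi⟩ then x ↑j else 0 := by
        intro j
        simp only [Amat, Matrix.of_apply, if_pos hi, ite_mul, one_mul, zero_mul]
        exact if_congr (by simp [Subtype.ext_iff, eq_comm]) rfl rfl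
      rw [Finset.sum_congr rfl (fun j _ => h1 j)]
      simp
    · simp only [Amat, Matrix.of_apply, if_neg hi]
      rw [Finset.sum_coe_sort D (fun j => b i j * x j)]
      exact (hlin i hi).symm
  have hrw : ∑ i, w i * x i = ∑ i, w i * (∑ j : ↥D, Amat a D b i j * x ↑j) :=
    Finset.sum_congr rfl fun i _ => by rw [hA i]
  rw [hrw]
  simp_rw [Finset.mul_sum]
  rw [Finset.sum_comm]
  refine Finset.sum_congr rfl fun j _ => ?_
  rw [show (Matrix.vecMul w (Amat a D b)) j = ∑ i, w i * Amat a D b i j from by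
    simp [Matrix.vecMul, dotProduct]]
  rw [Finset.sum_mul]
  exact Finset.sum_congr rfl fun i _ => by ring

/-- second half of Lemma 6.5 of the paper. Under `[L1]` and `[L2]`, the
`|𝒥₁| × |𝒥₁|` matrix `Γ̄ = ∫ ((x_i)_{i∈𝒥₁})^{⊗2}/(α*·x) 1_{α*·x>0} ν(dx)` is
non-degenerate (positive definite), where `𝒥₁ = {j : α**_j ≠ 0}`. -/
theorem stmt11 (a r : ℕ) (hra : r < a)
    (D : Finset (Fin a)) (hD : D.card = r)
    (b : Fin a → Fin a → ℝ)
    (ν : Measure (Fin a → ℝ)) [IsProbabilityMeasure ν]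
    (hνsupp : ∀ᵐ x ∂ν, ∀ j, 0 ≤ x j)
    (hν2 : Integrable (fun x => ∑ j, (x j) ^ 2) ν)
    (hνlin : ∀ᵐ x ∂ν, ∀ i ∉ D, x i = ∑ j ∈ D, b i j * x j)
    (hDnd : (Matrix.of fun j k : ↥D => ∫ x, x ↑j * x ↑k ∂ν).det ≠ 0)
    (q : ℝ) (hq0 : 0 < q) (hq1 : q < 1) (κ : Fin a → ℝ) (hκ : ∀ j, 0 < κ j)
    (αstar : Fin a → ℝ) (hαstar : ∀ j, 0 ≤ αstar j) (hαstarne : αstar ≠ 0)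
    (Mα : ℝ) (hMα : 0 < Mα)
    (αss : Fin a → ℝ)
    -- [L1]
    (hmem : αss - αstar ∈ kerRowA a D b) (hbox : ∀ j, 0 ≤ αss j ∧ αss j < Mα)
    (hmin : ∀ α : Fin a → ℝ, α - αstar ∈ kerRowA a D b → (∀ j, 0 ≤ α j ∧ α j ≤ Mα) →
      α ≠ αss → ∑ j, κ j * |αss j| ^ q < ∑ j, κ j * |α j| ^ q)
    -- [L2]
    (hL2 : ∀ p : ℕ, p = 2 ∨ p = 3 ∨ p = 4 →
      Integrable (fun x => if 0 < ∑ j, αstar j * x j then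
        Real.sqrt (∑ j, (x j) ^ 2) ^ p / (∑ j, αstar j * x j) ^ (p - 1) else 0) ν) :
    (Matrix.of fun i k : {j : Fin a // αss j ≠ 0} =>
        ∫ x, (if 0 < ∑ l, αstar l * x l then x ↑i * x ↑k / (∑ l, αstar l * x l) else 0)
          ∂ν).PosDef := by
  classical
  have ha0 : 0 < a := lt_of_le_of_lt (Nat.zero_le r) hra
  have hS_meas : Measurable (fun x : Fin a → ℝ => ∑ l, αstar l * x l) :=
    Finset.measurable_sum _ fun l _ => (measurable_pi_apply l).const_mul _
  have hSet : MeasurableSet {x : Fin a → ℝ | 0 < ∑ l, αstar l * x l} :=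
    measurableSet_lt measurable_const hS_meas
  have habs : ∀ (x : Fin a → ℝ) (i k : Fin a), |x i * x k| ≤ ∑ j, (x j)^2 := by
    intro x i k
    have h1 : x i ^ 2 ≤ ∑ j, x j ^ 2 :=
      Finset.single_le_sum (fun j _ => sq_nonneg (x j)) (Finset.mem_univ i)
    have h2 : x k ^ 2 ≤ ∑ j, x j ^ 2 :=
      Finset.single_le_sum (fun j _ => sq_nonneg (x j)) (Finset.mem_univ k)
    rw [abs_mul]
    nlinarith [sq_abs (x i), sq_abs (x k), sq_nonneg (|x i| - |x k|), abs_nonneg (x i),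
      abs_nonneg (x k)]
  have hxx_int : ∀ i k : Fin a, Integrable (fun x : Fin a → ℝ => x i * x k) ν := by
    intro i k
    refine hν2.mono (((measurable_pi_apply i).mul (measurable_pi_apply k)).aestronglyMeasurable)
      (Filter.Eventually.of_forall fun x => ?_)
    rw [Real.norm_eq_abs, Real.norm_eq_abs]
    exact (habs x i k).trans (le_abs_self _)
  have hg_int : ∀ i k : Fin a, Integrable
      (fun x : Fin a → ℝ => if 0 < ∑ l, αstar l * x l then x i * x k / (∑ l, αstar l * x l)
        else 0) ν := by
    intro i k
    refine (hL2 2 (Or.inl rfl)).mono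
      ((Measurable.ite hSet (((measurable_pi_apply i).mul (measurable_pi_apply k)).div hS_meas)
        measurable_const).aestronglyMeasurable)
      (Filter.Eventually.of_forall fun x => ?_)
    by_cases hx : 0 < ∑ l, αstar l * x l
    · rw [if_pos hx, if_pos hx]
      have hsum0 : (0:ℝ) ≤ ∑ j, x j ^ 2 := Finset.sum_nonneg fun j _ => sq_nonneg _
      rw [Real.norm_eq_abs, Real.norm_eq_abs]
      have h2 : Real.sqrt (∑ j, x j ^ 2) ^ (2:ℕ) / (∑ l, αstar l * x l) ^ (2-1 : ℕ)
          = (∑ j, x j ^ 2) / (∑ l, αstar l * x l) := by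
        norm_num [Real.sq_sqrt hsum0]
      rw [h2, abs_div, abs_of_pos hx, abs_of_nonneg (div_nonneg hsum0 hx.le)]
      gcongr
      exact habs x i k
    · simp [hx]
  rw [Matrix.posDef_iff_dotProduct_mulVec]
  refine ⟨?_, ?_⟩
  · -- Hermitian
    ext i k
    simp only [Matrix.conjTranspose_apply, Matrix.of_apply, star_trivial]
    refine integral_congr_ae (Filter.Eventually.of_forall fun x => ?_)
    by_cases hx : 0 < ∑ l, αstar l * x l <;> simp [hx, mul_comm]
  · intro c hc
    set v : Fin a → ℝ := fun j => if h : αss j ≠ 0 then c ⟨j, h⟩ else 0 with hv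
    have hvc : ∀ i : {j : Fin a // αss j ≠ 0}, v ↑i = c i := by
      intro i
      simp only [hv]
      rw [dif_pos i.2]
    have hvsum : ∀ x : Fin a → ℝ,
        ∑ j, v j * x j = ∑ i : {j : Fin a // αss j ≠ 0}, c i * x ↑i := by
      intro x
      have h1 : ∑ j, v j * x j = ∑ j ∈ Finset.univ.filter (fun j => αss j ≠ 0), v j * x j := by
        refine (Finset.sum_subset (Finset.filter_subset _ _) ?_).symm
        intro j _ hj
        simp only [Finset.mem_filter, Finset.mem_univ, true_and, not_not] at hj
        simp [hv, hj]
      rw [h1, Finset.sum_subtype (p := fun j => αss j ≠ 0) _ (fun j => by simp) (fun j => v j * x j)]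
      exact Finset.sum_congr rfl fun i _ => by rw [hvc i]
    have hvne : v ≠ 0 := by
      obtain ⟨i, hi⟩ := Function.ne_iff.mp hc
      intro h0
      exact hi (by simpa [hvc i] using congrFun h0 ↑i)
    by_contra hnpos
    push_neg at hnpos
    -- the quadratic form as an integral
    have hQsum : ∀ x : Fin a → ℝ,
        (if 0 < ∑ l, αstar l * x l then
            (∑ i : {j : Fin a // αss j ≠ 0}, c i * x ↑i)^2 / (∑ l, αstar l * x l) else 0)
        = ∑ i : {j : Fin a // αss j ≠ 0}, ∑ k : {j : Fin a // αss j ≠ 0},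
            c i * c k * (if 0 < ∑ l, αstar l * x l then x ↑i * x ↑k / (∑ l, αstar l * x l)
              else 0) := by
      intro x
      by_cases hx : 0 < ∑ l, αstar l * x l
      · simp only [if_pos hx]
        rw [sq, Finset.sum_mul_sum, Finset.sum_div]
        refine Finset.sum_congr rfl fun i _ => ?_
        rw [Finset.sum_div]
        refine Finset.sum_congr rfl fun k _ => ?_
        ring
      · simp [hx]
    have hQnn : ∀ x : Fin a → ℝ, 0 ≤ (if 0 < ∑ l, αstar l * x l then
        (∑ i : {j : Fin a // αss j ≠ 0}, c i * x ↑i)^2 / (∑ l, αstar l * x l) else 0) := by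
      intro x
      by_cases hx : 0 < ∑ l, αstar l * x l
      · rw [if_pos hx]; positivity
      · simp [hx]
    have hQint : Integrable (fun x : Fin a → ℝ => if 0 < ∑ l, αstar l * x l then
        (∑ i : {j : Fin a // αss j ≠ 0}, c i * x ↑i)^2 / (∑ l, αstar l * x l) else 0) ν := by
      have h1 : Integrable (fun x : Fin a → ℝ =>
          ∑ i : {j : Fin a // αss j ≠ 0}, ∑ k : {j : Fin a // αss j ≠ 0},
            c i * c k * (if 0 < ∑ l, αstar l * x l then x ↑i * x ↑k / (∑ l, αstar l * x l)
              else 0)) ν :=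
        integrable_finset_sum _ fun i _ =>
          integrable_finset_sum _ fun k _ => ((hg_int ↑i ↑k).const_mul _)
      exact h1.congr (Filter.Eventually.of_forall fun x => (hQsum x).symm)
    have hform : (∫ x, (if 0 < ∑ l, αstar l * x l then
          (∑ i : {j : Fin a // αss j ≠ 0}, c i * x ↑i)^2 / (∑ l, αstar l * x l) else 0) ∂ν)
        = dotProduct (star c)
          ((Matrix.of fun i k : {j : Fin a // αss j ≠ 0} =>
            ∫ x, (if 0 < ∑ l, αstar l * x l then x ↑i * x ↑k / (∑ l, αstar l * x l) else 0)
              ∂ν).mulVec c) := by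
      simp only [hQsum]
      rw [integral_finset_sum]
      · simp only [dotProduct, Matrix.mulVec, Matrix.of_apply, star_trivial,
          Pi.star_apply]
        refine Finset.sum_congr rfl fun i _ => ?_
        rw [integral_finset_sum]
        · rw [Finset.mul_sum]
          refine Finset.sum_congr rfl fun k _ => ?_
          rw [integral_const_mul]
          ring
        · exact fun k _ => ((hg_int ↑i ↑k).const_mul _)
      · exact fun i _ => integrable_finset_sum _ fun k _ => ((hg_int ↑i ↑k).const_mul _)
    have hz : (∫ x, (if 0 < ∑ l, αstar l * x l then
        (∑ i : {j : Fin a // αss j ≠ 0}, c i * x ↑i)^2 / (∑ l, αstar l * x l) else 0) ∂ν)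
        = 0 := by
      refine le_antisymm ?_ (integral_nonneg hQnn)
      rw [hform]; exact hnpos
    have hQ0 : ∀ᵐ x ∂ν, (if 0 < ∑ l, αstar l * x l then
        (∑ i : {j : Fin a // αss j ≠ 0}, c i * x ↑i)^2 / (∑ l, αstar l * x l) else 0) = 0 := by
      have h := (integral_eq_zero_iff_of_nonneg hQnn hQint).mp hz
      filter_upwards [h] with x hx using hx
    -- kernel vectors are a.e. orthogonal to x
    have hker_dot : ∀ w : Fin a → ℝ, w ∈ kerRowA a D b → ∀ x : Fin a → ℝ,
        (∀ i ∉ D, x i = ∑ j ∈ D, b i j * x j) → ∑ i, w i * x i = 0 := by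
      intro w hw x hx
      rw [rowsum a D b x hx w]
      have hw0 : Matrix.vecMul w (Amat a D b) = 0 := by
        simpa [kerRowA, Matrix.vecMulLinear_apply] using hw
      simp [hw0]
    have hkey : ∀ᵐ x ∂ν, ∑ i : {j : Fin a // αss j ≠ 0}, c i * x ↑i = 0 := by
      filter_upwards [hνsupp, hνlin, hQ0] with x hxnn hxlin hQx
      by_cases hx : 0 < ∑ l, αstar l * x l
      · rw [if_pos hx] at hQx
        rcases div_eq_zero_iff.mp hQx with h | h
        · exact pow_eq_zero_iff (two_ne_zero) |>.mp h
        · exact absurd h (ne_of_gt hx)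
      · have hS0 : ∑ l, αstar l * x l = 0 :=
          le_antisymm (not_lt.mp hx)
            (Finset.sum_nonneg fun l _ => mul_nonneg (hαstar l) (hxnn l))
        have h1 : ∑ i, (αss - αstar) i * x i = 0 := hker_dot _ hmem x hxlin
        have h2 : ∑ i, αss i * x i = 0 := by
          have h3 : ∑ i, αss i * x i
              = ∑ i, ((αss - αstar) i * x i + αstar i * x i) :=
            Finset.sum_congr rfl fun i _ => by simp [Pi.sub_apply]; ring
          rw [h3, Finset.sum_add_distrib, h1, hS0, add_zero]
        have h4 : ∀ j ∈ Finset.univ, αss j * x j = 0 :=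
          (Finset.sum_eq_zero_iff_of_nonneg
            (fun j _ => mul_nonneg (hbox j).1 (hxnn j))).mp h2
        refine Finset.sum_eq_zero fun i _ => ?_
        rcases mul_eq_zero.mp (h4 ↑i (Finset.mem_univ _)) with h | h
        · exact absurd h i.2
        · rw [h, mul_zero]
    have hvx0 : ∀ᵐ x ∂ν, ∑ j, v j * x j = 0 := by
      filter_upwards [hkey] with x hx
      rw [hvsum x]; exact hx
    set u : ↥D → ℝ := Matrix.vecMul v (Amat a D b) with hu
    have huvx : ∀ᵐ x ∂ν, ∑ j : ↥D, u j * x ↑j = 0 := by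
      filter_upwards [hνlin, hvx0] with x hlin hvx
      rw [hu, ← rowsum a D b x hlin v]; exact hvx
    by_cases hu0 : u = 0
    · -- v is in the kernel: contradiction with strict minimality via concavity
      have hvker : v ∈ kerRowA a D b := by
        refine LinearMap.mem_ker.mpr ?_
        rw [Matrix.vecMulLinear_apply]
        rw [← hu]; exact hu0
      have hax : ∀ j, v j ≠ 0 → 0 < αss j ∧ αss j < Mα := by
        intro j hj
        have hjne : αss j ≠ 0 := by
          by_contra h0
          exact hj (by simp [hv, h0])
        exact ⟨lt_of_le_of_ne (hbox j).1 (Ne.symm hjne), (hbox j).2⟩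
      set f : Fin a → ℝ := fun j => if v j = 0 then 1
        else min (αss j) (Mα - αss j) / |v j| with hf
      have hfpos : ∀ j, 0 < f j := by
        intro j
        by_cases hj : v j = 0
        · simp [hf, hj]
        · have h5 := hax j hj
          simp only [hf, if_neg hj]
          exact div_pos (lt_min h5.1 (by linarith [h5.2])) (abs_pos.mpr hj)
      haveI : Nonempty (Fin a) := ⟨⟨0, ha0⟩⟩
      set t : ℝ := Finset.univ.inf' Finset.univ_nonempty f with htd
      have ht0 : 0 < t :=
        (Finset.lt_inf'_iff _).mpr fun j _ => hfpos j
      have htle : ∀ j, v j ≠ 0 → t * |v j| ≤ min (αss j) (Mα - αss j) := by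
        intro j hj
        have h1 : t ≤ f j := Finset.inf'_le _ (Finset.mem_univ j)
        simp only [hf, if_neg hj] at h1
        exact (le_div_iff₀ (abs_pos.mpr hj)).mp h1
      have hbnd : ∀ ε : ℝ, ε = t ∨ ε = -t → ∀ j, 0 ≤ αss j + ε * v j ∧ αss j + ε * v j ≤ Mα := by
        intro ε hε j
        by_cases hj : v j = 0
        · simp only [hj, mul_zero, add_zero]
          exact ⟨(hbox j).1, (hbox j).2.le⟩
        · have h2 := htle j hj
          have h3 : |ε * v j| ≤ min (αss j) (Mα - αss j) := by
            rw [abs_mul]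
            rcases hε with rfl | rfl
            · rwa [abs_of_pos ht0]
            · rwa [abs_neg, abs_of_pos ht0]
          have h3a : |ε * v j| ≤ αss j := h3.trans (min_le_left _ _)
          have h3b : |ε * v j| ≤ Mα - αss j := h3.trans (min_le_right _ _)
          have h4 := neg_abs_le (ε * v j)
          have h5 := le_abs_self (ε * v j)
          constructor <;> linarith
      have hmemt : ∀ ε : ℝ, (fun j => αss j + ε * v j) - αstar ∈ kerRowA a D b := by
        intro ε
        have heq : (fun j => αss j + ε * v j) - αstar = (αss - αstar) + ε • v := by
          funext j
          simp only [Pi.sub_apply, Pi.add_apply, Pi.smul_apply, smul_eq_mul]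
          ring
        rw [heq]
        exact Submodule.add_mem _ hmem (Submodule.smul_mem _ ε hvker)
      have hneq : ∀ ε : ℝ, ε ≠ 0 → (fun j => αss j + ε * v j) ≠ αss := by
        intro ε hε h
        apply hvne
        funext j
        have h1 := congrFun h j
        have h2 : ε * v j = 0 := by linarith
        simpa using (mul_eq_zero.mp h2).resolve_left hε
      have hp := hmin _ (hmemt t) (hbnd t (Or.inl rfl)) (hneq t (ne_of_gt ht0))
      have hm := hmin _ (hmemt (-t)) (hbnd (-t) (Or.inr rfl)) (hneq (-t) (by linarith))
      have hcon : ∀ j : Fin a,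
          (κ j * |αss j + t * v j| ^ q + κ j * |αss j + (-t) * v j| ^ q) / 2
            ≤ κ j * |αss j| ^ q := by
        intro j
        have h1 := (hbnd t (Or.inl rfl) j).1
        have h2 := (hbnd (-t) (Or.inr rfl) j).1
        rw [abs_of_nonneg h1, abs_of_nonneg h2, abs_of_nonneg (hbox j).1]
        have h6 := mid_rpow hq0 hq1 h1 h2
        have heq : (αss j + t * v j + (αss j + (-t) * v j)) / 2 = αss j := by ring
        rw [heq] at h6
        calc (κ j * (αss j + t * v j) ^ q + κ j * (αss j + (-t) * v j) ^ q) / 2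
            = κ j * (((αss j + t * v j) ^ q + (αss j + (-t) * v j) ^ q) / 2) := by ring
          _ ≤ κ j * αss j ^ q := mul_le_mul_of_nonneg_left h6 (hκ j).le
      have hsum : (∑ j, κ j * |αss j + t * v j| ^ q
          + ∑ j, κ j * |αss j + (-t) * v j| ^ q) / 2 ≤ ∑ j, κ j * |αss j| ^ q := by
        rw [← Finset.sum_add_distrib, Finset.sum_div]
        exact Finset.sum_le_sum fun j _ => hcon j
      linarith
    · -- u ≠ 0 contradicts the non-degeneracy of the D-moment matrix
      have hM2u : (Matrix.of fun j k : ↥D => ∫ x, x ↑j * x ↑k ∂ν).mulVec u = 0 := by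
        funext j
        show ∑ k : ↥D, (∫ x, x ↑j * x ↑k ∂ν) * u k = 0
        have h1 : ∀ k : ↥D, (∫ x, x ↑j * x ↑k ∂ν) * u k = ∫ x, x ↑j * x ↑k * u k ∂ν :=
          fun k => (integral_mul_const _ _).symm
        have h2 : ∑ k : ↥D, ∫ x, x ↑j * x ↑k * u k ∂ν
            = ∫ x, ∑ k : ↥D, x ↑j * x ↑k * u k ∂ν :=
          (integral_finset_sum _ (fun (k : ↥D) _ => (hxx_int ↑j ↑k).mul_const (u k))).symm
        rw [Finset.sum_congr rfl fun k _ => h1 k, h2]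
        rw [show (0:ℝ) = ∫ _x, (0:ℝ) ∂ν from (integral_zero _ _).symm]
        refine integral_congr_ae ?_
        filter_upwards [huvx] with x hx
        calc ∑ k : ↥D, x ↑j * x ↑k * u k = x ↑j * ∑ k : ↥D, u k * x ↑k := by
              rw [Finset.mul_sum]
              exact Finset.sum_congr rfl fun k _ => by ring
          _ = 0 := by rw [hx, mul_zero]
      have hdet : IsUnit (Matrix.of fun j k : ↥D => ∫ x, x ↑j * x ↑k ∂ν).det :=
        isUnit_iff_ne_zero.mpr hDnd
      have hu' : u = 0 := by
        calc u = (1 : Matrix ↥D ↥D ℝ).mulVec u := by rw [Matrix.one_mulVec]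
          _ = ((Matrix.of fun j k : ↥D => ∫ x, x ↑j * x ↑k ∂ν)⁻¹
              * (Matrix.of fun j k : ↥D => ∫ x, x ↑j * x ↑k ∂ν)).mulVec u := by
                rw [Matrix.nonsing_inv_mul _ hdet]
          _ = (Matrix.of fun j k : ↥D => ∫ x, x ↑j * x ↑k ∂ν)⁻¹.mulVec
              ((Matrix.of fun j k : ↥D => ∫ x, x ↑j * x ↑k ∂ν).mulVec u) := by
                rw [Matrix.mulVec_mulVec]
          _ = 0 := by rw [hM2u, Matrix.mulVec_zero]
      exact hu0 hu'
end

section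
/- Let g, g* ∈ ℝ, α, β ∈ ℝ^a, and let α_i*, β_i* ∈ ℝ for i ∈ 𝒜 with α_i* ≠ 0 and β_i* ≠ 0. Then the identity g + Σ_{j=1}^a α_j e^{β_j x_j} = g* + Σ_{i∈𝒜} α_i* e^{β_i* x_i} holds for all x = (x_1,…,x_a) ∈ ℝ^a if and only if the following hold simultaneously: g + Σ_{k∈𝒜ᶜ} α_k = g*; β_i = β_i* and α_i = α_i* for every i ∈ 𝒜; and α_k β_k = 0 for every k ∈ 𝒜ᶜ. -/
open Finset

lemma aux_const {A B c : ℝ} (hB : B ≠ 0) (h : ∀ t : ℝ, A * Real.exp (B * t) = c) :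
    A = 0 := by
  have h0 := h 0; have h1 := h 1
  simp only [mul_zero, Real.exp_zero, mul_one] at h0 h1
  have : A * (Real.exp B - 1) = 0 := by rw [mul_sub]; linarith
  rcases mul_eq_zero.1 this with h | h
  · exact h
  · exfalso; apply hB
    have : Real.exp B = 1 := by linarith
    rwa [Real.exp_eq_one_iff] at this

lemma aux_key {A A' B B' C : ℝ} (hA' : A' ≠ 0) (hB' : B' ≠ 0)
    (h : ∀ t : ℝ, A * Real.exp (B * t) = A' * Real.exp (B' * t) + C) :
    B = B' ∧ A = A' := by
  have hA : A ≠ 0 := by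
    intro hA0
    apply hA'
    apply aux_const hB' (c := -C)
    intro t; have := h t; rw [hA0, zero_mul] at this; linarith
  have hB : B ≠ 0 := by
    intro hB0
    apply hA'
    apply aux_const hB' (c := A - C)
    intro t; have := h t; rw [hB0, zero_mul, Real.exp_zero, mul_one] at this; linarith
  set p := Real.exp B with hp
  set q := Real.exp B' with hq
  have h0 := h 0; have h1 := h 1; have h2 := h 2
  simp only [mul_zero, Real.exp_zero, mul_one] at h0 h1
  rw [show B * 2 = B + B by ring, show B' * 2 = B' + B' by ring,
    Real.exp_add, Real.exp_add] at h2
  have hp1 : p ≠ 1 := by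
    rw [hp, Ne, Real.exp_eq_one_iff]; exact hB
  have e1 : A * (p - 1) = A' * (q - 1) := by ring_nf; linarith
  have e2 : A * (p - 1) * (p + 1) = A' * (q - 1) * (q + 1) := by ring_nf; nlinarith
  rw [← e1] at e2
  have hAp : A * (p - 1) ≠ 0 := mul_ne_zero hA (sub_ne_zero.2 hp1)
  have hpq : p = q := by
    have := mul_left_cancel₀ hAp e2; linarith
  have hBB : B = B' := Real.exp_eq_exp.1 hpq
  refine ⟨hBB, ?_⟩
  rw [← hpq] at e1
  exact mul_right_cancel₀ (sub_ne_zero.2 hp1) e1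

lemma aux_sum_mem {n : ℕ} {s : Finset (Fin n)} {j : Fin n} (hj : j ∈ s)
    (f h : Fin n → ℝ) (t : ℝ) :
    ∑ i ∈ s, f i * Real.exp (h i * (Pi.single j t : Fin n → ℝ) i) =
      f j * Real.exp (h j * t) + ∑ i ∈ s.erase j, f i := by
  rw [← Finset.add_sum_erase s _ hj, Pi.single_eq_same]
  congr 1
  apply Finset.sum_congr rfl
  intro i hi
  rw [Pi.single_eq_of_ne (Finset.ne_of_mem_erase hi), mul_zero, Real.exp_zero, mul_one]

lemma aux_sum_not_mem {n : ℕ} {s : Finset (Fin n)} {j : Fin n} (hj : j ∉ s)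
    (f h : Fin n → ℝ) (t : ℝ) :
    ∑ i ∈ s, f i * Real.exp (h i * (Pi.single j t : Fin n → ℝ) i) = ∑ i ∈ s, f i := by
  apply Finset.sum_congr rfl
  intro i hi
  rw [Pi.single_eq_of_ne (by rintro rfl; exact hj hi), mul_zero, Real.exp_zero, mul_one]

/-- Characterization of the set of true parameter values of the
non-identifiable superposed proportional hazards intensity model
`λ(g,α,β) = g + Σ_j α_j e^{β_j x_j}` whose true intensity is
`g* + Σ_{i∈𝒜} α_i* e^{β_i* x_i}` with `α_i* ≠ 0`, `β_i* ≠ 0`. -/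
theorem stmt13 (a : ℕ) (𝒜 : Finset (Fin a)) (g gstar : ℝ)
    (α β αs βs : Fin a → ℝ)
    (hαs : ∀ i ∈ 𝒜, αs i ≠ 0) (hβs : ∀ i ∈ 𝒜, βs i ≠ 0) :
    (∀ x : Fin a → ℝ,
        g + ∑ j, α j * Real.exp (β j * x j) =
          gstar + ∑ i ∈ 𝒜, αs i * Real.exp (βs i * x i)) ↔
      ((g + ∑ k ∈ 𝒜ᶜ, α k = gstar) ∧
        (∀ i ∈ 𝒜, β i = βs i) ∧ (∀ i ∈ 𝒜, α i = αs i) ∧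
        (∀ k ∈ 𝒜ᶜ, α k * β k = 0)) := by
  constructor
  · intro h
    have hmem : ∀ j ∈ 𝒜, β j = βs j ∧ α j = αs j := by
      intro j hj
      have hfun : ∀ t : ℝ, α j * Real.exp (β j * t) =
          αs j * Real.exp (βs j * t) +
          (gstar + ∑ i ∈ 𝒜.erase j, αs i - (g + ∑ i ∈ univ.erase j, α i)) := by
        intro t
        have := h (Pi.single j t)
        rw [aux_sum_mem (Finset.mem_univ j) α β t, aux_sum_mem hj αs βs t] at this
        linarith
      exact aux_key (hαs j hj) (hβs j hj) hfun
    have hcomp : ∀ k ∈ 𝒜ᶜ, α k * β k = 0 := by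
      intro k hk
      rw [Finset.mem_compl] at hk
      have hfun : ∀ t : ℝ, α k * Real.exp (β k * t) =
          gstar + ∑ i ∈ 𝒜, αs i - (g + ∑ i ∈ univ.erase k, α i) := by
        intro t
        have := h (Pi.single k t)
        rw [aux_sum_mem (Finset.mem_univ k) α β t, aux_sum_not_mem hk αs βs t] at this
        linarith
      rcases eq_or_ne (β k) 0 with h0 | h0
      · rw [h0, mul_zero]
      · rw [aux_const h0 hfun, zero_mul]
    refine ⟨?_, fun i hi => (hmem i hi).1, fun i hi => (hmem i hi).2, hcomp⟩
    have h0 := h 0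
    simp only [Pi.zero_apply, mul_zero, Real.exp_zero, mul_one] at h0
    rw [← Finset.sum_add_sum_compl 𝒜 α] at h0
    have : ∑ i ∈ 𝒜, α i = ∑ i ∈ 𝒜, αs i :=
      Finset.sum_congr rfl fun i hi => (hmem i hi).2
    linarith
  · rintro ⟨h1, h2, h3, h4⟩ x
    have key : ∑ j, α j * Real.exp (β j * x j) =
        ∑ i ∈ 𝒜, αs i * Real.exp (βs i * x i) + ∑ k ∈ 𝒜ᶜ, α k := by
      rw [← Finset.sum_add_sum_compl 𝒜 (fun j => α j * Real.exp (β j * x j))]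
      congr 1
      · exact Finset.sum_congr rfl fun i hi => by rw [h2 i hi, h3 i hi]
      · apply Finset.sum_congr rfl
        intro k hk
        rcases mul_eq_zero.1 (h4 k hk) with h0 | h0
        · rw [h0, zero_mul]
        · rw [h0, zero_mul, Real.exp_zero, mul_one]
    rw [key]; linarith
end

section
/- For all g, g* ∈ ℝ, α, β ∈ ℝ^a, α_i*, β_i* ∈ ℝ (i ∈ 𝒜), and all x ∈ ℝ^a, the following decomposition holds: g + Σ_{j=1}^a α_j e^{β_j x_j} − (g* + Σ_{i∈𝒜} α_i* e^{β_i* x_i}) = w(β,x) · h(g,α,β), where the dot denotes the Euclidean inner product on ℝ^{1+2|𝒜|+|𝒜ᶜ|}. -/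
open Finset

/-- The difference quotient `(e^{b t} - e^{b* t})/(b - b*)`, interpreted by continuity
as `t e^{b* t}` when `b = b*`. -/
noncomputable def diffQuot (b bstar t : ℝ) : ℝ :=
  if b = bstar then t * Real.exp (bstar * t)
  else (Real.exp (b * t) - Real.exp (bstar * t)) / (b - bstar)

lemma key1 (b bs t A As : ℝ) :
    diffQuot b bs t * (A * (b - bs)) + Real.exp (bs * t) * (A - As)
      = A * Real.exp (b * t) - As * Real.exp (bs * t) := by
  unfold diffQuot
  by_cases h : b = bs
  · subst h; ring
  · rw [if_neg h]
    have hne : b - bs ≠ 0 := sub_ne_zero.mpr h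
    field_simp
    ring

lemma key2 (b t A : ℝ) :
    diffQuot b 0 t * (A * b) + A = A * Real.exp (b * t) := by
  unfold diffQuot
  by_cases h : b = 0
  · subst h; simp
  · rw [if_neg h]
    have hne : b - 0 ≠ 0 := by simpa using h
    field_simp
    simp only [mul_zero, sub_zero, Real.exp_zero]; ring

/-- Decomposition `λ(g,α,β,x) − λ*(x) = w(β,x) ⬝ h(g,α,β)`, where the dot
is the Euclidean inner product on `ℝ^{1+2|𝒜|+|𝒜ᶜ|}` (indexed by `Unit ⊕ 𝒜 ⊕ 𝒜 ⊕ 𝒜ᶜ`). -/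
theorem stmt14 (a : ℕ) (𝒜 : Finset (Fin a)) (gstar : ℝ) (αs βs : Fin a → ℝ)
    (g : ℝ) (α β : Fin a → ℝ) (x : Fin a → ℝ) :
    g + ∑ j, α j * Real.exp (β j * x j)
        - (gstar + ∑ i ∈ 𝒜, αs i * Real.exp (βs i * x i)) =
      ∑ idx : Unit ⊕ (↥𝒜 ⊕ (↥𝒜 ⊕ ↥(𝒜ᶜ))),
        (Sum.elim (fun _ : Unit => (1 : ℝ))
            (Sum.elim (fun i : ↥𝒜 => diffQuot (β i.1) (βs i.1) (x i.1))
              (Sum.elim (fun i : ↥𝒜 => Real.exp (βs i.1 * x i.1))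
                (fun k : ↥(𝒜ᶜ) => diffQuot (β k.1) 0 (x k.1)))) idx) *
        (Sum.elim (fun _ : Unit => g - gstar + ∑ k ∈ 𝒜ᶜ, α k)
            (Sum.elim (fun i : ↥𝒜 => α i.1 * (β i.1 - βs i.1))
              (Sum.elim (fun i : ↥𝒜 => α i.1 - αs i.1)
                (fun k : ↥(𝒜ᶜ) => α k.1 * β k.1))) idx) := by
  rw [Fintype.sum_sum_type, Fintype.sum_sum_type, Fintype.sum_sum_type]
  simp only [Sum.elim_inl, Sum.elim_inr, one_mul]
  rw [Finset.sum_coe_sort 𝒜 (fun i => diffQuot (β i) (βs i) (x i) * (α i * (β i - βs i))),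
    Finset.sum_coe_sort 𝒜 (fun i => Real.exp (βs i * x i) * (α i - αs i)),
    Finset.sum_coe_sort (𝒜ᶜ) (fun k => diffQuot (β k) 0 (x k) * (α k * β k))]
  simp only [Finset.sum_const, Finset.card_univ, Fintype.card_unit, one_smul]
  have h1 : ∑ i ∈ 𝒜, diffQuot (β i) (βs i) (x i) * (α i * (β i - βs i))
      + ∑ i ∈ 𝒜, Real.exp (βs i * x i) * (α i - αs i)
      = ∑ i ∈ 𝒜, α i * Real.exp (β i * x i) - ∑ i ∈ 𝒜, αs i * Real.exp (βs i * x i) := by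
    rw [← Finset.sum_add_distrib, ← Finset.sum_sub_distrib]
    exact Finset.sum_congr rfl fun i _ => key1 _ _ _ _ _
  have h2 : ∑ k ∈ 𝒜ᶜ, α k + ∑ k ∈ 𝒜ᶜ, diffQuot (β k) 0 (x k) * (α k * β k)
      = ∑ k ∈ 𝒜ᶜ, α k * Real.exp (β k * x k) := by
    rw [← Finset.sum_add_distrib]
    exact Finset.sum_congr rfl fun k _ => by rw [add_comm]; exact key2 _ _ _
  have h3 := Finset.sum_add_sum_compl 𝒜 (fun j => α j * Real.exp (β j * x j))
  linarith [h1, h2, h3]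
end
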